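/- arXiv:1205.6432 — 6 statements merged into one kernel-verified Lean document; each statement's English description precedes it below -/
import Mathlib

section
/- For all integers d, k ≥ 2, the Natarajan dimension of the multiclass SVM hypothesis class L = {h_W : W ∈ ℝ^{k×(d+1)}} of functions ℝ^d → [k] is at least d·(k−1). -/
/-!
Put the `k - 1` groups of `d` points on the parabolic cylinder `x₁ = x₀²`: group `i` consists of
`d` affinely independent points of the hyperplane `{a_i = 0}` through the chord joining the
parabola points with parameters `2i` and `2i + 1`, where `a_i(x) = -(x₀ - 2i)(x₀ - 2i - 1)` on the
cylinder, so `a_i ≤ -1` on all other groups. Given `T`, choose an affine `b_i` equal to `±1` on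
group `i` according to membership in `T`, and give class `i + 1` the weight `λ a_i + b_i` and
class `0` the weight `0`. For `λ` large, classes `j + 1` with `j ≠ i` score negatively on group
`i`, so there the argmax is `i + 1` on `T` and `0` off `T`.
-/

open MeasureTheory
open scoped ENNReal

noncomputable def argmaxFin {k : ℕ} [NeZero k] (f : Fin k → ℝ) : Fin k :=
  (Finset.univ.filter fun i => ∀ j, f j ≤ f i).min' (by
    obtain ⟨i, -, hi⟩ := Finset.exists_max_image (Finset.univ : Finset (Fin k)) f
      ⟨⟨0, Nat.pos_of_ne_zero (NeZero.ne k)⟩, Finset.mem_univ _⟩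
    exact ⟨i, Finset.mem_filter.mpr ⟨Finset.mem_univ _, fun j => hi j (Finset.mem_univ _)⟩⟩)

def aug {d : ℕ} (x : Fin d → ℝ) : Fin (d + 1) → ℝ := Fin.snoc x 1

/-- halfspaces over ℝ^d, `true` ↔ +1, sign(0) = 1 -/
def halfspace (d : ℕ) : Set ((Fin d → ℝ) → Bool) :=
  { h | ∃ w : Fin (d + 1) → ℝ, h = fun x => decide (0 ≤ ∑ i, w i * aug x i) }

noncomputable def msvm (d k : ℕ) [NeZero k] : Set ((Fin d → ℝ) → Fin k) :=
  { h | ∃ W : Fin k → Fin (d + 1) → ℝ,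
      h = fun x => argmaxFin (fun i => ∑ j, W i j * aug x j) }

def NShatters {X Y : Type*} (H : Set (X → Y)) (S : Set X) : Prop :=
  ∃ f₁ f₂ : X → Y, (∀ x ∈ S, f₁ x ≠ f₂ x) ∧
    ∀ T ⊆ S, ∃ g ∈ H, (∀ x ∈ T, g x = f₁ x) ∧ ∀ x ∈ S \ T, g x = f₂ x

def GShatters {X Y : Type*} (H : Set (X → Y)) (S : Set X) : Prop :=
  ∃ f : X → Y, ∀ T ⊆ S, ∃ g ∈ H, (∀ x ∈ T, g x = f x) ∧ ∀ x ∈ S \ T, g x ≠ f x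

def VCDimLE {X : Type*} (H : Set (X → Bool)) (d : ℕ) : Prop :=
  ∀ S : Finset X, (∀ b : X → Bool, ∃ h ∈ H, ∀ x ∈ S, h x = b x) → S.card ≤ d

inductive LTree (k : ℕ) : Type where
  | leaf : Fin k → LTree k
  | node : LTree k → LTree k → LTree k

def LTree.labels {k : ℕ} : LTree k → List (Fin k)
  | .leaf i => [i]
  | .node l r => l.labels ++ r.labels

/-- `T` is a tree for `k` classes: its leaf labels form a bijection with `[k]`. -/
def LTree.IsTreeFor {k : ℕ} (T : LTree k) : Prop := T.labels.Perm (List.finRange k)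

def treeClass {X : Type*} {k : ℕ} (H : Set (X → Bool)) : LTree k → Set (X → Fin k)
  | .leaf i => {fun _ => i}
  | .node l r => { f | ∃ c ∈ H, ∃ fl ∈ treeClass H l, ∃ fr ∈ treeClass H r,
      f = fun x => if c x then fr x else fl x }

def treesClass {X : Type*} (H : Set (X → Bool)) (k : ℕ) : Set (X → Fin k) :=
  ⋃ T ∈ { T : LTree k | T.IsTreeFor }, treeClass H T

noncomputable def decode {k : ℕ} [NeZero k] {J : Type*} [Fintype J]
    (M : Fin k → J → ℝ) (u : J → Bool) : Fin k :=
  argmaxFin (fun i => ∑ j, M i j * (if u j then (1 : ℝ) else -1))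

noncomputable def ecocClass {X : Type*} {k : ℕ} [NeZero k] {J : Type*} [Fintype J]
    (H : Set (X → Bool)) (M : Fin k → J → ℝ) : Set (X → Fin k) :=
  { g | ∃ h : J → X → Bool, (∀ j, h j ∈ H) ∧ g = fun x => decode M (fun j => h j x) }

def ovaCode (k : ℕ) : Fin k → Fin k → ℝ := fun i j => if i = j then 1 else -1

def apCode (k : ℕ) : Fin k → { p : Fin k × Fin k // p.1 < p.2 } → ℝ :=
  fun i p => if i = p.1.1 then -1 else if i = p.1.2 then 1 else 0

noncomputable def errStar {X : Type*} [MeasurableSpace X] {k : ℕ}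
    (D : Measure (X × Fin k)) (H : Set (X → Fin k)) : ℝ≥0∞ :=
  ⨅ h ∈ H, D { p | h p.1 ≠ p.2 }

noncomputable def errStarBin {X : Type*} [MeasurableSpace X]
    (Q : Measure (X × Bool)) (H : Set (X → Bool)) : ℝ≥0∞ :=
  ⨅ h ∈ H, Q { p | h p.1 ≠ p.2 }

inductive PTree : Type where
  | leaf : PTree
  | node : PTree → PTree → PTree

def PTree.nLeaves : PTree → ℕ
  | .leaf => 1
  | .node l r => l.nLeaves + r.nLeaves

def PTree.leftLeaves : PTree → ℕ
  | .leaf => 0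
  | .node l _ => l.nLeaves

def PTree.rightLeaves : PTree → ℕ
  | .leaf => 0
  | .node _ r => r.nLeaves

def PTree.labelAux {k : ℕ} (f : ℕ → Fin k) : PTree → ℕ → LTree k
  | .leaf, n => .leaf (f n)
  | .node l r, n => .node (PTree.labelAux f l n) (PTree.labelAux f r (n + l.nLeaves))

lemma argmaxFin_eq_of_forall_lt {k : ℕ} [NeZero k] {f : Fin k → ℝ} {i : Fin k}
    (h : ∀ j, j ≠ i → f j < f i) : argmaxFin f = i := by
  have hmax : ∀ j, f j ≤ f (argmaxFin f) :=
    (Finset.mem_filter.mp (Finset.min'_mem (Finset.univ.filter fun i => ∀ j, f j ≤ f i) _)).2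
  by_contra hne
  exact (h _ hne).not_ge (hmax i)

lemma argmaxFin_cons_zero_of_pos {m : ℕ} {f : Fin m → ℝ} {i : Fin m} (hi : 0 < f i)
    (hoff : ∀ j, j ≠ i → f j < 0) : argmaxFin (Fin.cons 0 f : Fin (m + 1) → ℝ) = i.succ := by
  refine argmaxFin_eq_of_forall_lt fun j hj => ?_
  cases j using Fin.cases with
  | zero => simpa using hi
  | succ j => simpa using (hoff j fun h => hj (congrArg Fin.succ h)).trans hi

lemma argmaxFin_cons_zero_of_neg {m : ℕ} {f : Fin m → ℝ} (hf : ∀ j, f j < 0) :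
    argmaxFin (Fin.cons 0 f : Fin (m + 1) → ℝ) = 0 := by
  refine argmaxFin_eq_of_forall_lt fun j hj => ?_
  cases j using Fin.cases with
  | zero => exact absurd rfl hj
  | succ j => simpa using hf j

lemma mem_msvm_cons_zero {d m : ℕ} (V : Fin m → Fin (d + 1) → ℝ) :
    (fun x => argmaxFin (Fin.cons 0 fun i => V i ⬝ᵥ aug x : Fin (m + 1) → ℝ)) ∈ msvm d (m + 1) := by
  refine ⟨Fin.cons 0 V, funext fun x => congrArg argmaxFin (funext fun c => ?_)⟩
  cases c using Fin.cases <;> simp [dotProduct]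

section Shattering

variable {d m : ℕ} {J : Type*} {P : Fin m → J → Fin d → ℝ} {a : Fin m → Fin (d + 1) → ℝ}

lemma injective_uncurry_of_separated_of_fit
    (ha_on : ∀ i j, a i ⬝ᵥ aug (P i j) = 0)
    (ha_off : ∀ i i' j, i' ≠ i → a i ⬝ᵥ aug (P i' j) ≤ -1)
    (hfit : ∀ i (c : J → ℝ), ∃ b : Fin (d + 1) → ℝ, ∀ j, b ⬝ᵥ aug (P i j) = c j) :
    Function.Injective (Function.uncurry P) := by
  classical
  rintro ⟨i, j⟩ ⟨i', j'⟩ h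
  simp only [Function.uncurry_apply_pair] at h
  obtain rfl : i = i' := by
    by_contra hne
    have := ha_off i i' j' (Ne.symm hne)
    rw [← h, ha_on] at this
    norm_num at this
  obtain ⟨b, hb⟩ := hfit i fun j'' => if j'' = j then 1 else 0
  have hj : (1 : ℝ) = if j' = j then 1 else 0 := by rw [← hb j', ← h, hb j, if_pos rfl]
  simpa [eq_comm] using hj

theorem nShatters_msvm_range [Finite J]
    (ha_on : ∀ i j, a i ⬝ᵥ aug (P i j) = 0)
    (ha_off : ∀ i i' j, i' ≠ i → a i ⬝ᵥ aug (P i' j) ≤ -1)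
    (hfit : ∀ i (c : J → ℝ), ∃ b : Fin (d + 1) → ℝ, ∀ j, b ⬝ᵥ aug (P i j) = c j) :
    NShatters (msvm d (m + 1)) (Set.range (Function.uncurry P)) := by
  classical
  have hinj := injective_uncurry_of_separated_of_fit ha_on ha_off hfit
  set f₁ := Function.extend (Function.uncurry P) (fun q => q.1.succ) 0
  have hf₁ : ∀ i j, f₁ (P i j) = i.succ := fun i j => hinj.extend_apply _ _ (i, j)
  refine ⟨f₁, 0, ?_, fun T hT => ?_⟩
  · rintro _ ⟨⟨i, j⟩, rfl⟩
    simp [hf₁]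
  choose b hb using fun i => hfit i fun j => if P i j ∈ T then 1 else -1
  choose M hM using fun i => Finite.exists_le fun q : Fin m × J => |b i ⬝ᵥ aug (P q.1 q.2)|
  set V : Fin m → Fin (d + 1) → ℝ := fun i => (M i + 1) • a i + b i
  have hV : ∀ i i' j, V i ⬝ᵥ aug (P i' j) = (M i + 1) * a i ⬝ᵥ aug (P i' j) + b i ⬝ᵥ aug (P i' j) :=
    fun i i' j => by simp [V, add_dotProduct, smul_dotProduct]
  have hown : ∀ i j, V i ⬝ᵥ aug (P i j) = if P i j ∈ T then 1 else -1 := fun i j => by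
    rw [hV, ha_on, hb, mul_zero, zero_add]
  have hoff : ∀ i i' j, i' ≠ i → V i ⬝ᵥ aug (P i' j) < 0 := fun i i' j hi => by
    have hbound := (le_abs_self _).trans (hM i (i', j))
    have hM0 := (abs_nonneg _).trans (hM i (i', j))
    rw [hV]
    nlinarith [ha_off i i' j hi]
  refine ⟨_, mem_msvm_cons_zero V, ?_, ?_⟩
  · rintro _ hx
    obtain ⟨⟨i, j⟩, rfl⟩ := hT hx
    rw [Function.uncurry_apply_pair] at hx ⊢
    rw [hf₁]
    refine argmaxFin_cons_zero_of_pos (by simp [hown, hx]) fun i' hi' => hoff i' i j hi'.symm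
  · rintro _ ⟨⟨⟨i, j⟩, rfl⟩, hx⟩
    rw [Function.uncurry_apply_pair] at hx
    refine argmaxFin_cons_zero_of_neg fun i' => ?_
    obtain rfl | hi' := eq_or_ne i' i
    · simp [hown, hx]
    · exact hoff i' i j hi'.symm

end Shattering

lemma snoc_dotProduct_aug {d : ℕ} (v x : Fin d → ℝ) (c : ℝ) :
    (Fin.snoc v c : Fin (d + 1) → ℝ) ⬝ᵥ aug x = v ⬝ᵥ x + c := by
  simp [dotProduct, aug, Fin.sum_univ_castSucc]

section ChordGroups

open Matrix

variable {n : ℕ}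

def parabolicPoint (s : ℝ) (y : Fin n → ℝ) : Fin (n + 2) → ℝ := vecCons s (vecCons (s ^ 2) y)

def secant (n : ℕ) (t : ℝ) : Fin (n + 3) → ℝ :=
  Fin.snoc (vecCons (2 * t + 1) (vecCons (-1) 0)) (-(t * (t + 1)))

lemma secant_dotProduct_aug_parabolicPoint (t s : ℝ) (y : Fin n → ℝ) :
    secant n t ⬝ᵥ aug (parabolicPoint s y) = -((s - t) * (s - t - 1)) := by
  rw [secant, snoc_dotProduct_aug]
  simp only [parabolicPoint, dotProduct_cons, head_cons, tail_cons, zero_dotProduct]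
  ring

lemma secant_dotProduct_aug_parabolicPoint_le {t s : ℝ} (hs : s ≤ t - 1 ∨ t + 2 ≤ s)
    (y : Fin n → ℝ) : secant n t ⬝ᵥ aug (parabolicPoint s y) ≤ -1 := by
  rw [secant_dotProduct_aug_parabolicPoint]
  rcases hs with hs | hs <;> nlinarith

def chordGroup (n : ℕ) (t : ℝ) : Fin (n + 2) → Fin (n + 2) → ℝ :=
  vecCons (parabolicPoint t 0) (vecCons (parabolicPoint (t + 1) 0)
    fun l => parabolicPoint t (Pi.single l 1))

lemma chordGroup_eq_parabolicPoint (t : ℝ) (j : Fin (n + 2)) :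
    ∃ y, chordGroup n t j = parabolicPoint t y ∨ chordGroup n t j = parabolicPoint (t + 1) y := by
  cases j using Fin.cases with
  | zero => exact ⟨0, Or.inl rfl⟩
  | succ j => cases j using Fin.cases with
    | zero => exact ⟨0, Or.inr rfl⟩
    | succ l => exact ⟨Pi.single l 1, Or.inl rfl⟩

lemma secant_dotProduct_aug_chordGroup (t : ℝ) (j : Fin (n + 2)) :
    secant n t ⬝ᵥ aug (chordGroup n t j) = 0 := by
  obtain ⟨y, hy | hy⟩ := chordGroup_eq_parabolicPoint t j <;>
    simp [hy, secant_dotProduct_aug_parabolicPoint]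

lemma secant_dotProduct_aug_chordGroup_le {i i' : ℕ} (h : i' ≠ i) (j : Fin (n + 2)) :
    secant n (2 * i) ⬝ᵥ aug (chordGroup n (2 * i') j) ≤ -1 := by
  have hs : ∀ e : ℝ, 0 ≤ e → e ≤ 1 → 2 * i' + e ≤ 2 * i - 1 ∨ 2 * i + 2 ≤ 2 * i' + e := by
    intro e he₀ he₁
    rcases h.lt_or_gt with h | h
    · have : (i' : ℝ) + 1 ≤ i := by exact_mod_cast h
      exact Or.inl (by linarith)
    · have : (i : ℝ) + 1 ≤ i' := by exact_mod_cast h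
      exact Or.inr (by linarith)
  obtain ⟨y, hy | hy⟩ := chordGroup_eq_parabolicPoint (2 * (i' : ℝ)) j <;> rw [hy]
  · exact secant_dotProduct_aug_parabolicPoint_le (by simpa using hs 0 le_rfl zero_le_one) y
  · exact secant_dotProduct_aug_parabolicPoint_le (hs 1 zero_le_one le_rfl) y

lemma exists_dotProduct_aug_chordGroup_eq (t : ℝ) (c : Fin (n + 2) → ℝ) :
    ∃ b : Fin (n + 3) → ℝ, ∀ j, b ⬝ᵥ aug (chordGroup n t j) = c j := by
  -- `b x = c 0 + (c 1 - c 0) * (x 0 - t) + ∑ l, (c (l + 2) - c 0) * x (l + 2)`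
  refine ⟨Fin.snoc (vecCons (c 1 - c 0) (vecCons 0 fun l => c l.succ.succ - c 0))
    (c 0 - (c 1 - c 0) * t), fun j => ?_⟩
  rw [snoc_dotProduct_aug]
  cases j using Fin.cases with
  | zero => simp [chordGroup, parabolicPoint]
  | succ j => cases j using Fin.cases with
    | zero =>
      simp only [chordGroup, parabolicPoint, Fin.succ_zero_eq_one, cons_val_one, cons_val_zero,
        dotProduct_cons, head_cons, tail_cons, dotProduct_zero]
      ring
    | succ l =>
      simp only [chordGroup, parabolicPoint, cons_val_succ, dotProduct_cons, head_cons, tail_cons,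
        dotProduct_single]
      ring

end ChordGroups

theorem stmt0_general (d k : ℕ) [NeZero k] (hd : 2 ≤ d) :
    ∃ S : Finset (Fin d → ℝ), NShatters (msvm d k) ↑S ∧ d * (k - 1) ≤ S.card := by
  obtain ⟨n, rfl⟩ := Nat.exists_eq_add_of_le' hd
  obtain ⟨m, rfl⟩ := Nat.exists_eq_succ_of_ne_zero (NeZero.ne k)
  set P : Fin m → Fin (n + 2) → Fin (n + 2) → ℝ := fun i => chordGroup n (2 * (i : ℕ))
  have ha_on : ∀ (i : Fin m) j, secant n (2 * (i : ℕ)) ⬝ᵥ aug (P i j) = 0 :=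
    fun i => secant_dotProduct_aug_chordGroup _
  have ha_off : ∀ (i i' : Fin m) j, i' ≠ i → secant n (2 * (i : ℕ)) ⬝ᵥ aug (P i' j) ≤ -1 :=
    fun i i' j h => secant_dotProduct_aug_chordGroup_le (Fin.val_injective.ne h) j
  have hfit : ∀ (i : Fin m) (c : Fin (n + 2) → ℝ), ∃ b, ∀ j, b ⬝ᵥ aug (P i j) = c j :=
    fun i => exists_dotProduct_aug_chordGroup_eq _
  refine ⟨Finset.univ.image (Function.uncurry P), ?_, ?_⟩
  · rw [Finset.coe_image, Finset.coe_univ, Set.image_univ]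
    exact nShatters_msvm_range ha_on ha_off hfit
  · rw [Finset.card_image_of_injective _ (injective_uncurry_of_separated_of_fit ha_on ha_off hfit)]
    simp [mul_comm]

/-- For all integers d, k ≥ 2, the Natarajan dimension of the multiclass SVM
hypothesis class `L = msvm d k` of functions ℝ^d → [k] is at least d·(k−1), i.e. there is an
N-shattered set of cardinality at least d·(k−1). -/
theorem stmt0 (d k : ℕ) [NeZero k] (hd : 2 ≤ d) (hk : 2 ≤ k) :
    ∃ S : Finset (Fin d → ℝ), NShatters (msvm d k) ↑S ∧ d * (k - 1) ≤ S.card :=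
  stmt0_general d k hd
end

section
/- There exists a universal constant C > 0 such that for all integers d, k ≥ 2, the graph dimension of the multiclass SVM hypothesis class L = {h_W : W ∈ ℝ^{k×(d+1)}} of functions ℝ^d → [k] satisfies d_G(L) ≤ C·d·k·log(d·k). -/
/-! On a finite set `S`, a multiclass SVM `h_W` is determined by the signs of the `|S| k²` linear
functionals `W ↦ ⟨W_i - W_j, x̄⟩` on the `k(d+1)`-dimensional space of weight matrices. `N` linear
functionals on an `n`-dimensional space realise at most `(N + 1)^n` sign patterns: dropping the last
functional loses only the patterns that occur on both of its sides, and those are realised on its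
kernel. A G-shattered `S` needs `2^|S|` distinct restrictions, so `2^|S| ≤ (|S| k² + 1)^{k(d+1)}`,
and taking logarithms gives `|S| = O(d k log(d k))`. -/

open MeasureTheory
open scoped ENNReal

open Module Set

theorem Function.FactorsThrough.ncard_range_le {α β γ : Type*} {f : α → β} {g : α → γ}
    (h : g.FactorsThrough f) (hf : (range f).Finite) : (range g).ncard ≤ (range f).ncard := by
  rcases isEmpty_or_nonempty γ with hγ | ⟨⟨c⟩⟩
  · have : IsEmpty α := ⟨fun a => hγ.elim (g a)⟩
    simp [range_eq_empty g]
  have hg : (Function.extend f g fun _ => c) ∘ f = g := funext (h.extend_apply _)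
  calc (range g).ncard = ((Function.extend f g fun _ => c) '' range f).ncard := by
        rw [← range_comp, hg]
    _ ≤ (range f).ncard := ncard_image_le hf

theorem two_pow_le_ncard_restrict_of_gShatters {X Y : Type*} [Finite Y] {H : Set (X → Y)}
    {S : Set X} [Finite S] (hS : GShatters H S) :
    2 ^ Nat.card S ≤ ((fun g (x : S) => g x) '' H).ncard := by
  classical
  have := Fintype.ofFinite S
  obtain ⟨f, hf⟩ := hS
  let agreement : (S → Y) → Finset S := fun r => Finset.univ.filter fun x => r x = f x
  have hsurj : (univ : Set (Finset S)) ⊆ agreement '' ((fun g (x : S) => g x) '' H) := by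
    intro T _
    obtain ⟨g, hgH, hgT, hgS⟩ := hf (Subtype.val '' (T : Set S)) (by simp)
    refine ⟨_, ⟨g, hgH, rfl⟩, ?_⟩
    ext x
    by_cases hx : x ∈ T
    · simpa [agreement, hx] using hgT x ⟨x, hx, rfl⟩
    · simpa [agreement, hx] using hgS x ⟨x.2, by simpa using hx⟩
  calc 2 ^ Nat.card S = (univ : Set (Finset S)).ncard := by
        simp [Nat.card_eq_fintype_card, Fintype.card_finset]
    _ ≤ (agreement '' ((fun g (x : S) => g x) '' H)).ncard := ncard_le_ncard hsurj (toFinite _)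
    _ ≤ ((fun g (x : S) => g x) '' H).ncard := ncard_image_le (toFinite _)

theorem exists_mem_ker_sign_iff {V ι : Type*} [AddCommGroup V] [Module ℝ V] (ℓ₀ : Dual ℝ V)
    (ℓ : ι → Dual ℝ V) {v w : V} (hvw : ∀ i, 0 ≤ ℓ i v ↔ 0 ≤ ℓ i w) (hv : 0 ≤ ℓ₀ v)
    (hw : ℓ₀ w < 0) : ∃ u ∈ LinearMap.ker ℓ₀, ∀ i, 0 ≤ ℓ i u ↔ 0 ≤ ℓ i v := by
  have hgap : 0 < ℓ₀ v - ℓ₀ w := by linarith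
  set t := ℓ₀ v / (ℓ₀ v - ℓ₀ w)
  have ht0 : 0 ≤ t := div_nonneg hv hgap.le
  have ht1 : t ≤ 1 := (div_le_one hgap).2 (by linarith)
  have hu : (1 - t) • v + t • w ∈ segment ℝ v w := ⟨1 - t, t, by linarith, ht0, by ring, rfl⟩
  refine ⟨(1 - t) • v + t • w, ?_, fun i => ⟨fun hui => ?_, fun hvi => ?_⟩⟩
  · simp only [LinearMap.mem_ker, map_add, map_smul, smul_eq_mul, t]
    field_simp
    ring
  · by_contra hvi
    rw [not_le] at hvi
    have hwi : ℓ i w < 0 := lt_of_not_ge fun h => hvi.not_ge ((hvw i).2 h)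
    exact (convex_halfSpace_lt (ℓ i).isLinear 0).segment_subset hvi hwi hu |>.not_ge hui
  · exact (convex_halfSpace_ge (ℓ i).isLinear 0).segment_subset hvi ((hvw i).1 hvi) hu

section SignPatterns

variable {V : Type*} [AddCommGroup V] [Module ℝ V]

def signPatterns {ι : Type*} (ℓ : ι → Dual ℝ V) : Set (ι → Bool) :=
  range fun v i => decide (0 ≤ ℓ i v)

theorem ncard_signPatterns_comp_equiv {ι ι' : Type*} (ℓ : ι → Dual ℝ V) (e : ι' ≃ ι) :
    (signPatterns (ℓ ∘ e)).ncard = (signPatterns ℓ).ncard := by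
  have : signPatterns (ℓ ∘ e) = (fun σ => σ ∘ e) '' signPatterns ℓ := by
    rw [signPatterns, signPatterns, ← range_comp]
    rfl
  rw [this, ncard_image_of_injective _ e.surjective.injective_comp_right]

theorem image_init_signPatterns {N : ℕ} (ℓ : Fin (N + 1) → Dual ℝ V) :
    Fin.init '' signPatterns ℓ = signPatterns (Fin.init ℓ) := by
  rw [signPatterns, signPatterns, ← range_comp]
  rfl

theorem ncard_le_ncard_image_init_add {N : ℕ} (P : Set (Fin (N + 1) → Bool)) :
    P.ncard ≤ (Fin.init '' P).ncard + (Fin.init '' {σ ∈ P | σ (Fin.last N) = true} ∩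
      Fin.init '' {σ ∈ P | σ (Fin.last N) = false}).ncard := by
  set Pt := {σ ∈ P | σ (Fin.last N) = true}
  set Pf := {σ ∈ P | σ (Fin.last N) = false}
  have hinjOn : ∀ b, InjOn Fin.init {σ ∈ P | σ (Fin.last N) = b} := by
    rintro b σ ⟨-, hσ⟩ τ ⟨-, hτ⟩ h
    rw [← Fin.snoc_init_self σ, ← Fin.snoc_init_self τ, h, hσ, hτ]
  calc P.ncard = (Pt ∪ Pf).ncard := by
        congr 1
        ext σ
        cases h : σ (Fin.last N) <;> simp [Pt, Pf, h]
    _ ≤ Pt.ncard + Pf.ncard := ncard_union_le _ _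
    _ = (Fin.init '' Pt ∪ Fin.init '' Pf).ncard + (Fin.init '' Pt ∩ Fin.init '' Pf).ncard := by
        rw [ncard_union_add_ncard_inter, (hinjOn _).ncard_image, (hinjOn _).ncard_image]
    _ ≤ (Fin.init '' P).ncard + (Fin.init '' Pt ∩ Fin.init '' Pf).ncard := by
        gcongr
        · exact toFinite _
        · rw [← image_union]
          exact image_mono (union_subset (sep_subset _ _) (sep_subset _ _))

theorem ncard_signPatterns_le_init_add_ker {N : ℕ} (ℓ : Fin (N + 1) → Dual ℝ V) :
    (signPatterns ℓ).ncard ≤ (signPatterns (Fin.init ℓ)).ncard +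
      (signPatterns fun i => (Fin.init ℓ i).domRestrict (LinearMap.ker (ℓ (Fin.last N)))).ncard := by
  refine (ncard_le_ncard_image_init_add _).trans ?_
  rw [image_init_signPatterns]
  gcongr
  · exact toFinite _
  rintro τ ⟨⟨_, ⟨⟨v, rfl⟩, hv⟩, rfl⟩, ⟨_, ⟨⟨w, rfl⟩, hw⟩, hvw⟩⟩
  simp only [decide_eq_true_eq, decide_eq_false_iff_not, not_le] at hv hw
  obtain ⟨u, hu, hsign⟩ := exists_mem_ker_sign_iff _ (Fin.init ℓ) (fun i => by
    simpa [Fin.init] using (congrFun hvw i).symm) hv hw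
  exact ⟨⟨u, hu⟩, funext fun i => by simpa [Fin.init] using decide_eq_decide.mpr (hsign i)⟩

theorem ncard_signPatterns_of_last_eq_zero {N : ℕ} (ℓ : Fin (N + 1) → Dual ℝ V)
    (h : ℓ (Fin.last N) = 0) : (signPatterns ℓ).ncard = (signPatterns (Fin.init ℓ)).ncard := by
  rw [← image_init_signPatterns, InjOn.ncard_image]
  rintro _ ⟨v, rfl⟩ _ ⟨w, rfl⟩ hvw
  funext i
  refine Fin.lastCases ?_ (fun j => congrFun hvw j) i
  simp [h]

theorem ncard_signPatterns_fin_le [FiniteDimensional ℝ V] {N : ℕ} (ℓ : Fin N → Dual ℝ V) :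
    (signPatterns ℓ).ncard ≤ (N + 1) ^ finrank ℝ V := by
  induction N generalizing V with
  | zero => simpa using ncard_le_one_of_subsingleton (signPatterns ℓ)
  | succ N ih =>
    by_cases h : ℓ (Fin.last N) = 0
    · rw [ncard_signPatterns_of_last_eq_zero ℓ h]
      exact (ih _).trans (Nat.pow_le_pow_left (by omega) _)
    · have hr := Module.Dual.finrank_ker_add_one_of_ne_zero h
      set r := finrank ℝ (LinearMap.ker (ℓ (Fin.last N)))
      rw [← hr]
      calc (signPatterns ℓ).ncard ≤ (N + 1) ^ (r + 1) + (N + 1) ^ r :=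
            (ncard_signPatterns_le_init_add_ker ℓ).trans (add_le_add (hr ▸ ih _) (ih _))
        _ = (N + 2) * (N + 1) ^ r := by ring
        _ ≤ (N + 1 + 1) ^ (r + 1) := by
            rw [pow_succ']
            gcongr
            omega

theorem ncard_signPatterns_le {ι : Type*} [Fintype ι] [FiniteDimensional ℝ V]
    (ℓ : ι → Dual ℝ V) : (signPatterns ℓ).ncard ≤ (Fintype.card ι + 1) ^ finrank ℝ V := by
  rw [← ncard_signPatterns_comp_equiv ℓ (Fintype.equivFin ι).symm]
  exact ncard_signPatterns_fin_le _

end SignPatterns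

theorem argmaxFin_congr {k : ℕ} [NeZero k] {f g : Fin k → ℝ}
    (h : ∀ i j, f j ≤ f i ↔ g j ≤ g i) : argmaxFin f = argmaxFin g := by
  unfold argmaxFin
  congr 1
  exact Finset.filter_congr fun i _ => forall_congr' (h i)

section MulticlassSVM

variable {d k : ℕ}

def msvmScore (x : Fin d → ℝ) (i : Fin k) : Dual ℝ (Fin k → Fin (d + 1) → ℝ) :=
  ∑ t, aug x t • (LinearMap.proj (R := ℝ) (φ := fun _ : Fin (d + 1) => ℝ) t ∘ₗ LinearMap.proj i)

theorem msvmScore_apply (x : Fin d → ℝ) (i : Fin k) (W : Fin k → Fin (d + 1) → ℝ) :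
    msvmScore x i W = ∑ t, W i t * aug x t := by
  simp [msvmScore, mul_comm]

theorem ncard_restrict_msvm_le [NeZero k] (S : Set (Fin d → ℝ)) [Finite S] :
    ((fun g (x : S) => g x) '' msvm d k).ncard ≤ (Nat.card S * k ^ 2 + 1) ^ (k * (d + 1)) := by
  have := Fintype.ofFinite S
  let restrict : (Fin k → Fin (d + 1) → ℝ) → S → Fin k :=
    fun W x => argmaxFin fun i => ∑ j, W i j * aug x j
  let ℓ : S × Fin k × Fin k → Dual ℝ (Fin k → Fin (d + 1) → ℝ) :=
    fun p => msvmScore p.1 p.2.1 - msvmScore p.1 p.2.2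
  have hfactor : restrict.FactorsThrough fun W p => decide (0 ≤ ℓ p W) := by
    intro W W' hWW'
    funext x
    refine argmaxFin_congr fun i j => ?_
    simpa [ℓ, msvmScore_apply, mul_comm] using congrFun hWW' (x, i, j)
  have hsub : (fun g (x : S) => g x) '' msvm d k ⊆ range restrict := by
    rintro _ ⟨_, ⟨W, rfl⟩, rfl⟩
    exact ⟨W, rfl⟩
  calc ((fun g (x : S) => g x) '' msvm d k).ncard ≤ (range restrict).ncard :=
        ncard_le_ncard hsub (toFinite _)
    _ ≤ (signPatterns ℓ).ncard := hfactor.ncard_range_le (toFinite _)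
    _ ≤ (Fintype.card (S × Fin k × Fin k) + 1) ^ finrank ℝ (Fin k → Fin (d + 1) → ℝ) :=
        ncard_signPatterns_le ℓ
    _ = (Nat.card S * k ^ 2 + 1) ^ (k * (d + 1)) := by
        simp [Nat.card_eq_fintype_card, sq, Module.finrank_pi_fintype]

end MulticlassSVM

theorem le_mul_log_of_two_pow_le {m n : ℕ} {a : ℝ} (hn : 1 ≤ n) (ha : 1 ≤ a)
    (h : (2 : ℝ) ^ m ≤ (m * a + 1) ^ n) : (m : ℝ) ≤ 3 * n * Real.log (4 * n * a) := by
  have hn' : (1 : ℝ) ≤ n := by exact_mod_cast hn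
  have hm : (0 : ℝ) ≤ m := m.cast_nonneg
  have hpos : 0 < m * a + 1 := by positivity
  have hlog : m * Real.log 2 ≤ n * Real.log (m * a + 1) := by
    simpa [Real.log_pow] using Real.log_le_log (by positivity) h
  -- `log y ≤ ε y - 1 - log ε` with `ε = 1 / (4 n a)` trades the logarithm for `m / 4`
  have hε : Real.log (m * a + 1) ≤ (m * a + 1) / (4 * n * a) - 1 + Real.log (4 * n * a) := by
    have := Real.log_le_sub_one_of_pos (div_pos hpos (by positivity : (0 : ℝ) < 4 * n * a))
    rw [Real.log_div hpos.ne' (by positivity)] at this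
    linarith
  have hmul : n * ((m * a + 1) / (4 * n * a)) ≤ m / 4 + 1 / 4 := by
    rw [mul_div_assoc', div_le_iff₀ (by positivity)]
    nlinarith
  have hL : 0 ≤ Real.log (4 * n * a) := Real.log_nonneg (by nlinarith)
  have h2 : 0.69 * (m : ℝ) ≤ m * Real.log 2 := by nlinarith [Real.log_two_gt_d9]
  nlinarith [mul_le_mul_of_nonneg_left hε (by positivity : (0 : ℝ) ≤ n), mul_nonneg hm hL,
    mul_nonneg (by positivity : (0 : ℝ) ≤ n) hL]

theorem mul_log_le_thirty_mul_log {d k : ℝ} (hd : 2 ≤ d) (hk : 2 ≤ k) :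
    3 * (k * (d + 1)) * Real.log (4 * (k * (d + 1)) * k ^ 2) ≤ 30 * d * k * Real.log (d * k) := by
  have hpow : 4 * (k * (d + 1)) * k ^ 2 ≤ (d * k) ^ 5 :=
    calc 4 * (k * (d + 1)) * k ^ 2 ≤ 8 * (d * k ^ 3) := by
          nlinarith [mul_le_mul_of_nonneg_left (show d + 1 ≤ 2 * d by linarith)
            (by positivity : 0 ≤ 4 * k ^ 3)]
      _ ≤ (d ^ 4 * k ^ 2) * (d * k ^ 3) := by
          gcongr
          nlinarith [pow_le_pow_left₀ zero_le_two hd 4, pow_le_pow_left₀ zero_le_two hk 2]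
      _ = (d * k) ^ 5 := by ring
  have hlog : Real.log (4 * (k * (d + 1)) * k ^ 2) ≤ 5 * Real.log (d * k) := by
    simpa [Real.log_pow] using Real.log_le_log (by positivity) hpow
  have hlog_nonneg : 0 ≤ Real.log (d * k) := Real.log_nonneg (by nlinarith)
  calc 3 * (k * (d + 1)) * Real.log (4 * (k * (d + 1)) * k ^ 2)
      ≤ 3 * (k * (d + 1)) * (5 * Real.log (d * k)) := by gcongr
    _ ≤ 3 * (2 * d * k) * (5 * Real.log (d * k)) :=
        mul_le_mul_of_nonneg_right (by nlinarith) (by linarith)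
    _ = 30 * d * k * Real.log (d * k) := by ring

/-- There is a universal constant C > 0 such that for all integers d, k ≥ 2, the
graph dimension of the multiclass SVM class satisfies d_G(L) ≤ C·d·k·log(d·k): every
G-shattered set has cardinality at most C·d·k·log(d·k). -/
theorem stmt1 : ∃ C : ℝ, 0 < C ∧ ∀ (d k : ℕ) [NeZero k], 2 ≤ d → 2 ≤ k →
    ∀ S : Finset (Fin d → ℝ), GShatters (msvm d k) ↑S →
      (S.card : ℝ) ≤ C * d * k * Real.log (d * k) := by
  refine ⟨30, by norm_num, fun d k _ hd hk S hS => ?_⟩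
  have hcount : 2 ^ S.card ≤ (S.card * k ^ 2 + 1) ^ (k * (d + 1)) := by
    simpa using (two_pow_le_ncard_restrict_of_gShatters hS).trans
      (ncard_restrict_msvm_le (S : Set (Fin d → ℝ)))
  have hK : (2 : ℝ) ≤ k := by exact_mod_cast hk
  have hcard := le_mul_log_of_two_pow_le (m := S.card) (n := k * (d + 1)) (a := (k : ℝ) ^ 2)
    (Nat.one_le_iff_ne_zero.2 (by positivity)) (by nlinarith) (by exact_mod_cast hcount)
  push_cast at hcard
  exact hcard.trans (mul_log_le_thirty_mul_log (by exact_mod_cast hd) hK)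
end

section
/- There exists a universal constant C > 0 such that for all integers d, k ≥ 2, every set X, and every binary hypothesis class H ⊆ {±1}^X of VC dimension at most d+1, the graph dimension of H_trees (the union over all trees T for k classes of the tree classifier classes H_T) is at most C·d·k·log(d·k); in particular d_G(H_T) ≤ C·d·k·log(d·k) for every tree T for k classes. -/
/-!
Restricted to a finite set `S`, a classifier in `H_trees` is determined by its tree, one of at
most `(k + 1) ^ (2k - 1)` (via its preorder traversal), together with the restrictions to `S` of
its `k - 1` node classifiers, each one of at most `(|S| + 1) ^ (d + 1)` patterns by Sauer–Shelah.
A G-shattered `S` has `2 ^ |S|` distinct restrictions, so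
`2 ^ |S| ≤ (k + 1) ^ (2k - 1) * (|S| + 1) ^ ((d + 1) (k - 1))`, and solving for `|S|` gives
`|S| = O(d k log (d k))`.
-/

open MeasureTheory
open scoped ENNReal

namespace LTree

variable {k : ℕ}

def numInternal : LTree k → ℕ
  | .leaf _ => 0
  | .node l r => l.numInternal + r.numInternal + 1

theorem length_labels (T : LTree k) : T.labels.length = T.numInternal + 1 := by
  induction T with
  | leaf i => rfl
  | node l r ihl ihr => simp only [labels, numInternal, List.length_append, ihl, ihr]; omega

theorem IsTreeFor.numInternal_add_one {T : LTree k} (hT : T.IsTreeFor) :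
    T.numInternal + 1 = k := by
  simpa [length_labels] using hT.length_eq

def preorder : LTree k → List (Option (Fin k))
  | .leaf i => [some i]
  | .node l r => none :: (l.preorder ++ r.preorder)

theorem length_preorder (T : LTree k) : T.preorder.length = 2 * T.numInternal + 1 := by
  induction T with
  | leaf i => rfl
  | node l r ihl ihr =>
    simp only [preorder, numInternal, List.length_cons, List.length_append, ihl, ihr]
    omega

theorem preorder_append_inj : ∀ {T₁ T₂ : LTree k} {s₁ s₂ : List (Option (Fin k))},
    T₁.preorder ++ s₁ = T₂.preorder ++ s₂ → T₁ = T₂ ∧ s₁ = s₂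
  | .leaf i, .leaf j, s₁, s₂, h => by simp_all [preorder]
  | .leaf _, .node _ _, _, _, h => by simp [preorder] at h
  | .node _ _, .leaf _, _, _, h => by simp [preorder] at h
  | .node l₁ r₁, .node l₂ r₂, s₁, s₂, h => by
      simp only [preorder, List.cons_append, List.cons.injEq, List.append_assoc, true_and] at h
      obtain ⟨rfl, hr⟩ := preorder_append_inj h
      obtain ⟨rfl, rfl⟩ := preorder_append_inj hr
      exact ⟨rfl, rfl⟩

theorem preorder_injective : Function.Injective (preorder (k := k)) := fun _ _ h =>
  (preorder_append_inj (s₁ := []) (s₂ := []) (by simpa using h)).1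

theorem mapsTo_preorder_setOf_isTreeFor :
    Set.MapsTo preorder {T : LTree k | T.IsTreeFor} {l | l.length = 2 * k - 1} := fun T hT => by
  have := IsTreeFor.numInternal_add_one hT
  show T.preorder.length = _
  rw [length_preorder]
  omega

theorem finite_setOf_isTreeFor : {T : LTree k | T.IsTreeFor}.Finite :=
  .of_injOn mapsTo_preorder_setOf_isTreeFor preorder_injective.injOn (List.finite_length_eq _ _)

theorem ncard_setOf_isTreeFor_le : {T : LTree k | T.IsTreeFor}.ncard ≤ (k + 1) ^ (2 * k - 1) :=
  calc {T : LTree k | T.IsTreeFor}.ncard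
      ≤ {l : List (Option (Fin k)) | l.length = 2 * k - 1}.ncard :=
        Set.ncard_le_ncard_of_injOn _ mapsTo_preorder_setOf_isTreeFor preorder_injective.injOn
          (List.finite_length_eq _ _)
    _ = Fintype.card (List.Vector (Option (Fin k)) (2 * k - 1)) := by
        rw [← Nat.card_coe_set_eq, ← Nat.card_eq_fintype_card]; rfl
    _ = (k + 1) ^ (2 * k - 1) := by simp [card_vector]

end LTree

open Finset in
theorem sum_choose_le_succ_pow (n D : ℕ) : ∑ i ∈ Iic D, n.choose i ≤ (n + 1) ^ D := by
  rw [add_pow, ← Nat.range_succ_eq_Iic]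
  refine sum_le_sum fun i hi => ?_
  rw [one_pow, mul_one]
  exact (Nat.choose_le_pow n i).trans
    (Nat.le_mul_of_pos_right _ (Nat.choose_pos (Nat.lt_succ_iff.1 (mem_range.1 hi))))

open Finset in
/-- The Sauer–Shelah lemma. -/
theorem ncard_le_of_vcDimLE {ι : Type*} [Fintype ι] {U : Set (ι → Bool)} {D : ℕ}
    (hU : VCDimLE U D) : U.ncard ≤ (Fintype.card ι + 1) ^ D := by
  classical
  let trueSet : (ι → Bool) → Finset ι := fun u => univ.filter (u · = true)
  have hinj : trueSet.Injective := fun u v huv => funext fun i => by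
    have := congrArg (i ∈ ·) huv
    simp only [trueSet, mem_filter, mem_univ, true_and] at this
    exact Bool.eq_iff_iff.2 (Iff.of_eq this)
  let 𝒜 := U.toFinset.image trueSet
  have hvc : 𝒜.vcDim ≤ D := Finset.sup_le fun s hs => hU s fun b => by
    obtain ⟨_, h𝒜, hsu⟩ := (mem_shatterer.1 hs) (filter_subset (b ·) s)
    obtain ⟨u, hu, rfl⟩ := mem_image.1 h𝒜
    refine ⟨u, Set.mem_toFinset.1 hu, fun i hi => ?_⟩
    have := Finset.ext_iff.1 hsu i
    cases hb : b i <;> cases hui : u i <;> simp [trueSet, hi, hb, hui] at this ⊢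
  calc U.ncard = #𝒜 := by rw [Set.ncard_eq_toFinset_card', card_image_of_injective _ hinj]
    _ ≤ #𝒜.shatterer := card_le_card_shatterer 𝒜
    _ ≤ ∑ i ∈ Iic 𝒜.vcDim, (Fintype.card ι).choose i := card_shatterer_le_sum_vcDim
    _ ≤ ∑ i ∈ Iic D, (Fintype.card ι).choose i := sum_le_sum_of_subset (Iic_subset_Iic.2 hvc)
    _ ≤ (Fintype.card ι + 1) ^ D := sum_choose_le_succ_pow _ _

section Traces

variable {X Y : Type*}

def traceOn (S : Finset X) (G : Set (X → Y)) : Set (S → Y) := S.restrict '' G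

theorem VCDimLE.traceOn {H : Set (X → Bool)} {D : ℕ} (hH : VCDimLE H D) (S : Finset X) :
    VCDimLE (traceOn S H) D := fun s hs => by
  rw [← Finset.card_map (Function.Embedding.subtype _)]
  refine hH _ fun b => ?_
  obtain ⟨_, ⟨h, hh, rfl⟩, hb⟩ := hs (b ∘ Subtype.val)
  exact ⟨h, hh, by simpa using hb⟩

theorem ncard_traceOn_treeClass_le {k : ℕ} (H : Set (X → Bool)) (S : Finset X) (T : LTree k) :
    (traceOn S (treeClass H T)).ncard ≤ (traceOn S H).ncard ^ T.numInternal := by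
  induction T with
  | leaf i =>
    simp [treeClass, traceOn, LTree.numInternal]
  | node l r ihl ihr =>
    have hsub : traceOn S (treeClass H (.node l r)) ⊆
        (fun p => fun x => if p.1 x then p.2.2 x else p.2.1 x) ''
          (traceOn S H ×ˢ traceOn S (treeClass H l) ×ˢ traceOn S (treeClass H r)) := by
      rintro _ ⟨_, ⟨c, hc, fl, hfl, fr, hfr, rfl⟩, rfl⟩
      exact ⟨(S.restrict c, S.restrict fl, S.restrict fr),
        ⟨⟨c, hc, rfl⟩, ⟨fl, hfl, rfl⟩, ⟨fr, hfr, rfl⟩⟩, rfl⟩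
    calc (traceOn S (treeClass H (.node l r))).ncard
        ≤ (traceOn S H ×ˢ traceOn S (treeClass H l) ×ˢ traceOn S (treeClass H r)).ncard :=
          (Set.ncard_le_ncard hsub).trans Set.ncard_image_le
      _ ≤ (traceOn S H).ncard * ((traceOn S H).ncard ^ l.numInternal *
            (traceOn S H).ncard ^ r.numInternal) := by
          rw [Set.ncard_prod, Set.ncard_prod]; gcongr
      _ = (traceOn S H).ncard ^ (LTree.node l r).numInternal := by
          simp only [LTree.numInternal]; ring

theorem GShatters.two_pow_card_le [Finite Y] {G : Set (X → Y)} {S : Finset X}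
    (hS : GShatters G S) : 2 ^ S.card ≤ (traceOn S G).ncard := by
  obtain ⟨f, hf⟩ := hS
  have hsurj : (fun u : S → Y => {x | u x = f x}) '' traceOn S G = Set.univ := by
    refine Set.eq_univ_of_forall fun A => ?_
    obtain ⟨g, hg, hgA, hgAc⟩ := hf (Subtype.val '' A) (by rintro _ ⟨x, -, rfl⟩; exact x.2)
    refine ⟨S.restrict g, ⟨g, hg, rfl⟩,
      Set.ext fun x => ⟨fun hx => ?_, fun hx => hgA _ ⟨x, hx, rfl⟩⟩⟩
    by_contra hxA
    exact hgAc x ⟨x.2, by simpa using hxA⟩ hx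
  calc 2 ^ S.card = (Set.univ : Set (Set S)).ncard := by simp [Nat.card_eq_fintype_card]
    _ ≤ (traceOn S G).ncard := hsurj ▸ Set.ncard_image_le

theorem GShatters.mono {G G' : Set (X → Y)} (h : G ⊆ G') {S : Set X} (hS : GShatters G S) :
    GShatters G' S :=
  let ⟨f, hf⟩ := hS
  ⟨f, fun T hT => let ⟨g, hg, hgT⟩ := hf T hT; ⟨g, h hg, hgT⟩⟩

theorem treeClass_subset_treesClass {k : ℕ} {H : Set (X → Bool)} {T : LTree k}
    (hT : T.IsTreeFor) : treeClass H T ⊆ treesClass H k :=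
  Set.subset_biUnion_of_mem (u := fun T => treeClass H T) hT

theorem two_pow_card_le_of_gShatters_treesClass {H : Set (X → Bool)} {d k : ℕ}
    (hH : VCDimLE H (d + 1)) {S : Finset X} (hS : GShatters (treesClass H k) S) :
    2 ^ S.card ≤ (k + 1) ^ (2 * k - 1) * ((S.card + 1) ^ (d + 1)) ^ (k - 1) := by
  have hpatterns : (traceOn S H).ncard ≤ (S.card + 1) ^ (d + 1) := by
    simpa using ncard_le_of_vcDimLE (hH.traceOn S)
  have hfin := LTree.finite_setOf_isTreeFor (k := k)
  have htree : ∀ T ∈ hfin.toFinset,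
      (traceOn S (treeClass H T)).ncard ≤ ((S.card + 1) ^ (d + 1)) ^ (k - 1) := fun T hT => by
    have hT : T.IsTreeFor := hfin.mem_toFinset.1 hT
    have hn : T.numInternal = k - 1 := by have := hT.numInternal_add_one; omega
    exact hn ▸ (ncard_traceOn_treeClass_le H S T).trans (Nat.pow_le_pow_left hpatterns _)
  calc 2 ^ S.card ≤ (traceOn S (treesClass H k)).ncard := hS.two_pow_card_le
    _ = (⋃ T ∈ hfin.toFinset, traceOn S (treeClass H T)).ncard := by
        simp only [traceOn, treesClass, Set.image_iUnion₂, Set.Finite.mem_toFinset]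
    _ ≤ ∑ T ∈ hfin.toFinset, (traceOn S (treeClass H T)).ncard :=
        Finset.set_ncard_biUnion_le _ _
    _ ≤ {T : LTree k | T.IsTreeFor}.ncard * ((S.card + 1) ^ (d + 1)) ^ (k - 1) := by
        rw [Set.ncard_eq_toFinset_card _ hfin]
        exact Finset.sum_le_card_nsmul _ _ _ htree
    _ ≤ (k + 1) ^ (2 * k - 1) * ((S.card + 1) ^ (d + 1)) ^ (k - 1) := by
        gcongr; exact LTree.ncard_setOf_isTreeFor_le

end Traces

open Real in
theorem le_of_le_mul_log_add {x a b : ℝ} (hx : 0 ≤ x) (ha : 0 < a)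
    (h : x ≤ a * log (x + 1) + b) : x ≤ 2 * a * log (2 * a) + 2 * b + 1 := by
  have hlog : log ((x + 1) / (2 * a)) ≤ (x + 1) / (2 * a) - 1 :=
    log_le_sub_one_of_pos (by positivity)
  rw [log_div (by positivity) (by positivity)] at hlog
  have hscaled := mul_le_mul_of_nonneg_left hlog ha.le
  have hcancel : a * ((x + 1) / (2 * a)) = (x + 1) / 2 := by field_simp
  rw [mul_sub, mul_sub, hcancel] at hscaled
  linarith

open Real in
theorem le_mul_log_of_two_pow_le_s2 {d k m : ℕ} (hd : 2 ≤ d) (hk : 2 ≤ k)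
    (h : 2 ^ m ≤ (k + 1) ^ (2 * k) * (m + 1) ^ (2 * d * k)) :
    (m : ℝ) ≤ 30 * d * k * log (d * k) := by
  have hd' : (2 : ℝ) ≤ d := by exact_mod_cast hd
  have hk' : (2 : ℝ) ≤ k := by exact_mod_cast hk
  set A : ℝ := d * k
  have hA : 4 ≤ A := by nlinarith
  have hL : 2 * log 2 ≤ log A := by
    rw [← log_rpow two_pos]; exact log_le_log (by norm_num) (by norm_num; linarith)
  have hL_pos : 1 ≤ log A := by linarith [log_two_gt_d9]
  have hlog_k : log (k + 1) ≤ log A := log_le_log (by positivity) (by nlinarith)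
  have hlog_8A : log (8 * A) ≤ 3 * log A := by
    rw [← log_rpow (by positivity)]
    exact log_le_log (by positivity)
      (by norm_num; nlinarith [mul_le_mul hA hA (by norm_num) (by linarith)])
  have hm : (m : ℝ) * log 2 ≤ 2 * k * log (k + 1) + 2 * A * log (m + 1) := by
    have := log_le_log (by positivity) (show ((2 ^ m : ℕ) : ℝ) ≤ _ from Nat.cast_le.mpr h)
    push_cast at this
    rw [log_mul (by positivity) (by positivity), log_pow, log_pow, log_pow] at this
    push_cast at this
    linarith
  have hm' : (m : ℝ) ≤ 4 * A * log (m + 1) + 4 * k * log (k + 1) := by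
    have := log_nonneg (show (1 : ℝ) ≤ k + 1 by linarith)
    have := log_nonneg (show (1 : ℝ) ≤ m + 1 by simp)
    nlinarith [log_two_gt_d9]
  have key := le_of_le_mul_log_add (Nat.cast_nonneg m) (by positivity) hm'
  have hfirst : 2 * (4 * A) * log (2 * (4 * A)) ≤ 24 * A * log A := by
    rw [show 2 * (4 * A) = 8 * A by ring]; nlinarith
  have hsecond : 2 * (4 * k * log (k + 1)) ≤ 4 * A * log A := by
    nlinarith [mul_le_mul_of_nonneg_left hlog_k (by linarith : (0 : ℝ) ≤ k),
      mul_nonneg (mul_nonneg (by linarith : (0 : ℝ) ≤ d - 2) (by linarith : (0 : ℝ) ≤ k))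
        (by linarith : 0 ≤ log A)]
  nlinarith

/-- There is a universal constant C > 0 such that for all integers d, k ≥ 2, every
set X and every binary hypothesis class H of VC dimension at most d+1, the graph dimension of
H_trees (the union over all trees T for k classes of H_T) is at most C·d·k·log(d·k); in
particular d_G(H_T) ≤ C·d·k·log(d·k) for every tree T for k classes. -/
theorem stmt2 : ∃ C : ℝ, 0 < C ∧ ∀ (d k : ℕ), 2 ≤ d → 2 ≤ k →
    ∀ (X : Type*) (H : Set (X → Bool)), VCDimLE H (d + 1) →
      (∀ S : Finset X, GShatters (treesClass H k) ↑S →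
        (S.card : ℝ) ≤ C * d * k * Real.log (d * k)) ∧
      (∀ T : LTree k, T.IsTreeFor → ∀ S : Finset X, GShatters (treeClass H T) ↑S →
        (S.card : ℝ) ≤ C * d * k * Real.log (d * k)) := by
  refine ⟨30, by norm_num, fun d k hd hk X H hH => ?_⟩
  have htrees (S : Finset X) (hS : GShatters (treesClass H k) S) :
      (S.card : ℝ) ≤ 30 * d * k * Real.log (d * k) := by
    refine le_mul_log_of_two_pow_le_s2 hd hk
      ((two_pow_card_le_of_gShatters_treesClass hH hS).trans ?_)
    rw [← pow_mul]
    gcongr <;> omega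
  exact ⟨htrees, fun T hT S hS => htrees S (hS.mono (treeClass_subset_treesClass hT))⟩
end

section
/- For all integers d, k, l ≥ 2 and every binary code matrix M ∈ {±1}^{k×l}, the Natarajan dimension of the ECOC class W^d_M built on halfspaces over ℝ^d satisfies d_N(W^d_M) ≥ d·δ(M)/2, where δ(M) is the minimal Hamming distance between any two distinct rows of M. -/
open MeasureTheory
open scoped ENNReal

/-!
Let rows `i₀ ≠ j₀` attain `δ` and put `G = ⌈δ/2⌉`. Take `G` groups of `d` points each, placed so
that a halfspace can label one group arbitrarily while being constant on all the others. Split the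
`δ` columns on which rows `i₀` and `j₀` differ into `G` pairs whose two columns default to
different rows. To realise a labelling of the points by `{i₀, j₀}`, the halfspace of a column
follows the labelling on its own group and its default row elsewhere. At any point, the only wrong
columns are those outside its group with the wrong default: fewer than `δ/2` of them, so the
argmax decoder, which is nearest-codeword decoding, returns the intended row. This N-shatters
`d G ≥ d δ / 2` points.
-/

lemma argmaxFin_eq_of_lt {k : ℕ} [NeZero k] {f : Fin k → ℝ} {i : Fin k}
    (h : ∀ c, c ≠ i → f c < f i) : argmaxFin f = i := by
  have hunique : ∀ c ∈ Finset.univ.filter fun c => ∀ j, f j ≤ f c, c = i := fun c hc => by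
    by_contra hne
    exact (h c hne).not_ge ((Finset.mem_filter.mp hc).2 i)
  exact hunique _ (Finset.min'_mem _ _)

def boolToSign (b : Bool) : ℝ := if b then 1 else -1

noncomputable def signToBool (r : ℝ) : Bool := decide (0 ≤ r)

lemma boolToSign_signToBool {r : ℝ} (hr : r = 1 ∨ r = -1) : boolToSign (signToBool r) = r := by
  rcases hr with rfl | rfl <;> norm_num [boolToSign, signToBool]

lemma boolToSign_eq_one_or_neg_one (b : Bool) : boolToSign b = 1 ∨ boolToSign b = -1 := by
  cases b <;> simp [boolToSign]

lemma decide_nonneg_eq_of_pos {b : Bool} {r : ℝ} (h : 0 < boolToSign b * r) :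
    decide (0 ≤ r) = b := by
  cases b <;> simp only [boolToSign, Bool.false_eq_true, if_true, if_false] at h <;> simp <;>
    linarith

lemma sum_mul_eq_card_sub_two_mul_hammingDist {ι : Type*} [Fintype ι] {a b : ι → ℝ}
    (ha : ∀ i, a i = 1 ∨ a i = -1) (hb : ∀ i, b i = 1 ∨ b i = -1) :
    ∑ i, a i * b i = Fintype.card ι - 2 * hammingDist a b := by
  have hterm : ∀ i, a i * b i = 1 - 2 * if a i ≠ b i then 1 else 0 := by
    intro i
    rcases ha i with h1 | h1 <;> rcases hb i with h2 | h2 <;> norm_num [h1, h2]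
  simp only [hterm, Finset.sum_sub_distrib, ← Finset.mul_sum, Finset.sum_boole]
  simp [hammingDist]

lemma decode_eq_of_two_mul_hammingDist_lt {k : ℕ} [NeZero k] {ι : Type*} [Fintype ι]
    {M : Fin k → ι → ℝ} (hM : ∀ i j, M i j = 1 ∨ M i j = -1) {u : ι → Bool} {τ : Fin k}
    (h : ∀ c, c ≠ τ → 2 * hammingDist (M τ) (boolToSign ∘ u) < hammingDist (M τ) (M c)) :
    decode M u = τ := by
  refine argmaxFin_eq_of_lt fun c hc => ?_
  set v := boolToSign ∘ u
  have hv : ∀ j, v j = 1 ∨ v j = -1 := fun j => boolToSign_eq_one_or_neg_one (u j)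
  change ∑ j, M c j * v j < ∑ j, M τ j * v j
  rw [sum_mul_eq_card_sub_two_mul_hammingDist (hM c) hv,
    sum_mul_eq_card_sub_two_mul_hammingDist (hM τ) hv]
  have hcloser : hammingDist (M τ) v < hammingDist (M c) v := by
    have := hammingDist_triangle (M τ) v (M c)
    rw [hammingDist_comm v] at this
    linarith [h c hc]
  have : (hammingDist (M τ) v : ℝ) < hammingDist (M c) v := by exact_mod_cast hcloser
  linarith

lemma affine_mem_halfspace {d : ℕ} (v : Fin d → ℝ) (b : ℝ) :
    (fun x => decide (0 ≤ v ⬝ᵥ x + b)) ∈ halfspace d := by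
  refine ⟨Fin.snoc v b, funext fun x => ?_⟩
  simp only [Fin.sum_univ_castSucc, aug, dotProduct, Fin.snoc_castSucc, Fin.snoc_last, mul_one]
  congr

lemma quadratic_term_dominates {σ α u c K : ℝ} (hσ : |σ| ≤ 1) (hα : |α| ≤ 8) (hu : 1 ≤ |u|)
    (hK : u ^ 2 - |u| / 2 ≤ K) (hc : c = 1 ∨ c = -1) : 0 < c * (σ + α * u + 20 * c * K) := by
  have hαu : |α * u| ≤ 8 * |u| := by
    rw [abs_mul]; exact mul_le_mul_of_nonneg_right hα (abs_nonneg u)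
  have hsq : |u| ≤ u ^ 2 := by nlinarith [sq_abs u]
  rcases hc with rfl | rfl
  · linarith [neg_abs_le σ, neg_abs_le (α * u)]
  · linarith [le_abs_self σ, le_abs_self (α * u)]

section GroupPoints

variable {n : ℕ}

/- Group `t` consists of the point `(t, t²)` of the parabola `x₁ = x₀²`, a small translate along the
tangent direction `(1, 2t)` and small translates along the remaining axes. All of it lies on the
tangent hyperplane `x₁ - 2t x₀ + t² = 0`, above which every other group `s` lies at height about
`(s - t)²`: a large multiple of this height outweighs any affine interpolation on group `t`. -/
noncomputable def groupPoint (t : ℕ) : Fin (n + 2) → Fin (n + 2) → ℝ :=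
  Matrix.vecCons (Matrix.vecCons t (Matrix.vecCons (t ^ 2) 0))
    (Matrix.vecCons (Matrix.vecCons (t + 1 / 4) (Matrix.vecCons (t ^ 2 + t / 2) 0))
      fun i => Matrix.vecCons t (Matrix.vecCons (t ^ 2) (Pi.single i (1 / 4))))

lemma exists_affine_eq_on_groupPoint (t : ℕ) (σ : Fin (n + 2) → ℝ) (e : ℝ) :
    ∃ (v : Fin (n + 2) → ℝ) (b : ℝ), ∀ s a, v ⬝ᵥ groupPoint s a + b
      = σ a + 4 * (σ 1 - σ 0) * (s - t)
        + e * ((s - t) ^ 2 + if a = 1 then ((s : ℝ) - t) / 2 else 0) := by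
  refine ⟨Matrix.vecCons (4 * (σ 1 - σ 0) - 2 * t * e)
    (Matrix.vecCons e fun i => 4 * (σ i.succ.succ - σ 0)),
    σ 0 - 4 * (σ 1 - σ 0) * t + e * t ^ 2, fun s a => ?_⟩
  refine Fin.cases ?_ (Fin.cases ?_ fun i => ?_) a <;> simp [groupPoint, Fin.succ_succ_ne_one] <;>
    ring

lemma exists_halfspace_eq_on_groupPoint (t : ℕ) (β : Fin (n + 2) → Bool) (c : Bool) :
    ∃ h ∈ halfspace (n + 2), (∀ a, h (groupPoint t a) = β a) ∧
      ∀ s ≠ t, ∀ a, h (groupPoint s a) = c := by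
  set σ := fun a => boolToSign (β a)
  have hσ : ∀ a, |σ a| ≤ 1 := fun a => by
    rcases boolToSign_eq_one_or_neg_one (β a) with h | h <;> simp [σ, h]
  obtain ⟨v, b, hvb⟩ := exists_affine_eq_on_groupPoint t σ (20 * boolToSign c)
  refine ⟨_, affine_mem_halfspace v b, fun a => ?_, fun s hst a => ?_⟩ <;> rw [hvb]
  · simp only [sub_self, zero_pow two_ne_zero, zero_div, ite_self, add_zero, mul_zero]
    apply decide_nonneg_eq_of_pos
    rcases boolToSign_eq_one_or_neg_one (β a) with h | h <;> simp [σ, h]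
  · apply decide_nonneg_eq_of_pos
    refine quadratic_term_dominates (hσ a) ?_ ?_ ?_ (boolToSign_eq_one_or_neg_one c)
    · rw [abs_mul, abs_of_pos four_pos]
      linarith [abs_sub (σ 1) (σ 0), hσ 0, hσ 1]
    · rcases Nat.lt_or_gt_of_ne hst with h | h
      · rw [abs_sub_comm, le_abs]; left
        have : (s : ℝ) + 1 ≤ t := by exact_mod_cast h
        linarith
      · rw [le_abs]; left
        have : (t : ℝ) + 1 ≤ s := by exact_mod_cast h
        linarith
    · split_ifs
      · linarith [neg_abs_le ((s : ℝ) - t)]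
      · linarith [abs_nonneg ((s : ℝ) - t)]

lemma groupPoint_injective :
    Function.Injective fun q : ℕ × Fin (n + 2) => groupPoint q.1 q.2 := by
  rintro ⟨t, a⟩ ⟨s, b⟩ heq
  dsimp only at heq
  by_cases hst : s = t
  · subst hst
    obtain ⟨h, -, hβ, -⟩ := exists_halfspace_eq_on_groupPoint s (fun x => decide (x = a)) true
    have := hβ b
    rw [← heq, hβ a] at this
    simp_all
  · obtain ⟨h, -, hβ, hc⟩ := exists_halfspace_eq_on_groupPoint t (fun _ => true) false
    have := hc s hst b
    rw [← heq, hβ a] at this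
    simp at this

noncomputable def groupPoints (n G : ℕ) : Finset (Fin (n + 2) → ℝ) :=
  (Finset.range G ×ˢ Finset.univ).image fun q => groupPoint q.1 q.2

lemma card_groupPoints (G : ℕ) : (groupPoints n G).card = G * (n + 2) := by
  rw [groupPoints, Finset.card_image_of_injective _ groupPoint_injective, Finset.card_product,
    Finset.card_range, Finset.card_univ, Fintype.card_fin]

end GroupPoints

lemma Finset.exists_pairing {α : Type*} (D : Finset α) :
    ∃ (g : α → ℕ) (r : α → Bool), ∀ s < (D.card + 1) / 2, ∀ b,
      2 * (D.filter fun j => g j ≠ s ∧ r j = b).card < D.card := by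
  classical
  let p : α → ℕ := fun j => if h : j ∈ D then D.equivFin ⟨j, h⟩ else 0
  have hp_lt : ∀ j ∈ D, p j < D.card := fun j hj => by simp [p, hj]
  have hp_inj : Set.InjOn p D := fun i hi j hj hij => by
    rw [Finset.mem_coe] at hi hj
    simpa [p, hi, hj, Fin.val_inj] using hij
  refine ⟨fun j => p j / 2, fun j => decide (p j % 2 = 0), fun s hs b => ?_⟩
  have hcard : (D.filter fun j => p j / 2 ≠ s ∧ decide (p j % 2 = 0) = b).card
      ≤ ((Finset.range ((D.card + 1) / 2)).erase s).card := by
    refine Finset.card_le_card_of_injOn (fun j => p j / 2) (fun j hj => ?_)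
      (fun i hi j hj hij => ?_)
    · simp only [Finset.coe_filter, Set.mem_ofPred_eq] at hj
      have := hp_lt j hj.1
      simp only [Finset.coe_erase, Finset.coe_range, Set.mem_sdiff, Set.mem_Iio,
        Set.mem_singleton_iff]
      exact ⟨by omega, hj.2.1⟩
    · simp only [Finset.coe_filter, Set.mem_ofPred_eq] at hi hj
      refine hp_inj hi.1 hj.1 ?_
      have := hi.2.2.trans hj.2.2.symm
      simp only [decide_eq_decide] at this hij
      omega
  rw [Finset.card_erase_of_mem (Finset.mem_range.mpr hs), Finset.card_range] at hcard
  dsimp only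
  omega

theorem nShatters_ecocClass_halfspace_groupPoints {k l : ℕ} [NeZero k] {M : Fin k → Fin l → ℝ}
    (hM : ∀ i j, M i j = 1 ∨ M i j = -1) {i₀ j₀ : Fin k} (hne : i₀ ≠ j₀)
    (hmin : ∀ i j, i ≠ j → hammingDist (M i₀) (M j₀) ≤ hammingDist (M i) (M j)) :
    NShatters (ecocClass (halfspace (n + 2)) M)
      ↑(groupPoints n ((hammingDist (M i₀) (M j₀) + 1) / 2)) := by
  classical
  set D := Finset.univ.filter fun j => M i₀ j ≠ M j₀ j
  obtain ⟨g, r, hgr⟩ := D.exists_pairing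
  refine ⟨fun _ => i₀, fun _ => j₀, fun _ _ => hne, fun T hT => ?_⟩
  let row : Bool → Fin k := fun b => bif b then i₀ else j₀
  let target : (Fin (n + 2) → ℝ) → Bool := fun x => decide (x ∈ T)
  choose h hH hgroup hother using fun j => exists_halfspace_eq_on_groupPoint (g j)
    (fun a => signToBool (M (row (target (groupPoint (g j) a))) j)) (signToBool (M (row (r j)) j))
  have herr : ∀ s a, hammingDist (M (row (target (groupPoint s a))))
      (boolToSign ∘ fun j => h j (groupPoint s a))
        ≤ (D.filter fun j => g j ≠ s ∧ r j = !target (groupPoint s a)).card := by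
    intro s a
    refine Finset.card_le_card fun j hj => ?_
    simp only [D, Finset.mem_filter, Finset.mem_univ, true_and, Function.comp_apply] at hj ⊢
    by_cases hg : g j = s
    · subst hg
      rw [hgroup, boolToSign_signToBool (hM _ _)] at hj
      exact absurd rfl hj
    · rw [hother j s (Ne.symm hg), boolToSign_signToBool (hM _ _)] at hj
      generalize target (groupPoint s a) = b at hj ⊢
      generalize r j = c at hj ⊢
      cases b <;> cases c <;> simp_all [row, eq_comm (a := M j₀ j)]
  have hdecode : ∀ s < (hammingDist (M i₀) (M j₀) + 1) / 2, ∀ a,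
      decode M (fun j => h j (groupPoint s a)) = row (target (groupPoint s a)) := by
    intro s hs a
    refine decode_eq_of_two_mul_hammingDist_lt hM fun c hc => ?_
    have := hgr s hs (!target (groupPoint s a))
    have := hmin _ _ (Ne.symm hc)
    have := herr s a
    have : D.card = hammingDist (M i₀) (M j₀) := rfl
    omega
  refine ⟨_, ⟨h, hH, rfl⟩, fun x hx => ?_, fun x hx => ?_⟩
  · obtain ⟨⟨s, a⟩, hs, rfl⟩ := Finset.mem_image.mp (hT hx)
    rw [hdecode s (Finset.mem_range.mp (Finset.mem_product.mp hs).1)]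
    simp [row, target, hx]
  · obtain ⟨⟨s, a⟩, hs, rfl⟩ := Finset.mem_image.mp hx.1
    rw [hdecode s (Finset.mem_range.mp (Finset.mem_product.mp hs).1)]
    simp [row, target, hx.2]

theorem stmt5_general (d k l : ℕ) [NeZero k] (hd : 2 ≤ d) (hk : 2 ≤ k)
    (M : Fin k → Fin l → ℝ) (hM : ∀ i j, M i j = 1 ∨ M i j = -1) :
    ∃ S : Finset (Fin d → ℝ), NShatters (ecocClass (halfspace d) M) ↑S ∧
      (d : ℝ) * (sInf { n : ℕ | ∃ i j : Fin k, i < j ∧ n = hammingDist (M i) (M j) } : ℕ) / 2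
        ≤ S.card := by
  obtain ⟨n, rfl⟩ : ∃ n, d = n + 2 := ⟨d - 2, by omega⟩
  set δ := sInf { n : ℕ | ∃ i j : Fin k, i < j ∧ n = hammingDist (M i) (M j) }
  obtain ⟨i₀, j₀, hlt, hδ⟩ : δ ∈ { n : ℕ | ∃ i j : Fin k, i < j ∧ n = hammingDist (M i) (M j) } :=
    Nat.sInf_mem ⟨_, ⟨0, by omega⟩, ⟨1, by omega⟩, Fin.mk_lt_mk.mpr one_pos, rfl⟩
  have hmin : ∀ i j, i ≠ j → hammingDist (M i₀) (M j₀) ≤ hammingDist (M i) (M j) := by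
    intro i j hij
    rw [← hδ]
    rcases hij.lt_or_gt with h | h
    · exact Nat.sInf_le ⟨i, j, h, rfl⟩
    · exact hammingDist_comm (M i) (M j) ▸ Nat.sInf_le ⟨j, i, h, rfl⟩
  refine ⟨groupPoints n ((δ + 1) / 2),
    hδ ▸ nShatters_ecocClass_halfspace_groupPoints hM hlt.ne hmin, ?_⟩
  rw [card_groupPoints]
  have hδ_le : (δ : ℝ) ≤ 2 * ((δ + 1) / 2 : ℕ) := by
    exact_mod_cast (by omega : δ ≤ 2 * ((δ + 1) / 2))
  push_cast
  nlinarith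

/-- For all integers d, k, l ≥ 2 and every binary code matrix M ∈ {±1}^{k×l}, the
Natarajan dimension of the ECOC class W^d_M built on halfspaces over ℝ^d is at least
d·δ(M)/2, where δ(M) is the minimal Hamming distance between two distinct rows of M. -/
theorem stmt5 (d k l : ℕ) [NeZero k] (hd : 2 ≤ d) (hk : 2 ≤ k) (hl : 2 ≤ l)
    (M : Fin k → Fin l → ℝ) (hM : ∀ i j, M i j = 1 ∨ M i j = -1) :
    ∃ S : Finset (Fin d → ℝ), NShatters (ecocClass (halfspace d) M) ↑S ∧
      (d : ℝ) * (sInf { n : ℕ | ∃ i j : Fin k, i < j ∧ n = hammingDist (M i) (M j) } : ℕ) / 2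
        ≤ S.card :=
  stmt5_general d k l hd hk M hM
end

section
/- For every d ≥ 2 and k ≥ 3 there exists a Borel probability distribution D over ℝ^d × [k] such that Err*_D(L) = 0 while Err*_D(W^d_trees) > 0 and Err*_D(W^d_OvA) > 0; that is, the essential containment of W^d_trees and W^d_OvA in the multiclass SVM class L is strict. -/
open MeasureTheory
open scoped ENNReal

/-!
The sample consists of ten points in a plane of `ℝ^d`, labelled by the three sectors of the
linear multiclass predictor with scores `x₀`, `x₁`, `-x₀ - x₁`; the uniform distribution on it
is therefore realised by `L`, and any predictor erring on one of the ten points has error at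
least `1/10`.

The points are placed so that no halfspace cuts one class off from the other two. A tree of
halfspaces fitting the sample would then have to send the whole sample to one side at every
node, down to a single leaf, which cannot fit three labels. A One-vs-All predictor outputs the
first class whose detector fires (class 0 if none does), so fitting the sample forces the
detectors of classes 0 and 1 into sign patterns on the points that a linear-arithmetic
certificate rules out.
-/

open Matrix

lemma sum_mul_aug {d : ℕ} (w : Fin (d + 1) → ℝ) (x : Fin d → ℝ) :
    ∑ i, w i * aug x i = Fin.init w ⬝ᵥ x + w (Fin.last d) := by
  simp [Fin.sum_univ_castSucc, aug, dotProduct, Fin.init]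

lemma exists_sum_mul_aug_mulVec {m d : ℕ} (B : Matrix (Fin m) (Fin d) ℝ) (w : Fin (m + 1) → ℝ) :
    ∃ w' : Fin (d + 1) → ℝ, ∀ x, ∑ i, w' i * aug x i = ∑ i, w i * aug (B *ᵥ x) i :=
  ⟨Fin.snoc (Fin.init w ᵥ* B) (w (Fin.last m)), fun x => by
    simp only [sum_mul_aug, Fin.init_snoc, Fin.snoc_last, dotProduct_mulVec]⟩

lemma comp_mulVec_mem_halfspace {m d : ℕ} (B : Matrix (Fin m) (Fin d) ℝ)
    {c : (Fin m → ℝ) → Bool} (hc : c ∈ halfspace m) : (fun x => c (B *ᵥ x)) ∈ halfspace d := by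
  obtain ⟨w, rfl⟩ := hc
  obtain ⟨w', hw'⟩ := exists_sum_mul_aug_mulVec B w
  exact ⟨w', funext fun x => by rw [hw']⟩

lemma comp_mulVec_mem_msvm {m d k : ℕ} [NeZero k] (B : Matrix (Fin m) (Fin d) ℝ)
    {g : (Fin m → ℝ) → Fin k} (hg : g ∈ msvm m k) : (fun x => g (B *ᵥ x)) ∈ msvm d k := by
  obtain ⟨W, rfl⟩ := hg
  choose W' hW' using fun i => exists_sum_mul_aug_mulVec B (W i)
  exact ⟨W', funext fun x => by simp only [hW']⟩

lemma sum_mul_aug_two (w : Fin (2 + 1) → ℝ) (x : Fin 2 → ℝ) :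
    ∑ i, w i * aug x i = w 0 * x 0 + w 1 * x 1 + w 2 := by
  have : aug x = ![x 0, x 1, 1] := by ext i; fin_cases i <;> rfl
  simp [this, Fin.sum_univ_three]

lemma exists_of_mem_halfspace_two {c : (Fin 2 → ℝ) → Bool} (hc : c ∈ halfspace 2) :
    ∃ a b e : ℝ, ∀ x, c x = decide (0 ≤ a * x 0 + b * x 1 + e) := by
  obtain ⟨w, rfl⟩ := hc
  exact ⟨w 0, w 1, w 2, fun x => by simp only [sum_mul_aug_two]⟩

def planeProj {d : ℕ} (hd : 2 ≤ d) : Matrix (Fin 2) (Fin d) ℝ :=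
  (1 : Matrix (Fin d) (Fin d) ℝ).submatrix (Fin.castLE hd) id

lemma planeProj_mulVec_transpose {d : ℕ} (hd : 2 ≤ d) (p : Fin 2 → ℝ) :
    planeProj hd *ᵥ ((planeProj hd)ᵀ *ᵥ p) = p := by
  rw [mulVec_mulVec, planeProj, transpose_submatrix, transpose_one,
    ← submatrix_mul _ _ _ _ _ Function.bijective_id, one_mul,
    submatrix_one _ (Fin.castLE_injective hd), one_mulVec]

section argmaxFin

variable {k : ℕ} [NeZero k]

lemma le_argmaxFin (f : Fin k → ℝ) (j : Fin k) : f j ≤ f (argmaxFin f) := by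
  have hmem : argmaxFin f ∈ Finset.univ.filter fun i => ∀ j, f j ≤ f i := Finset.min'_mem _ _
  exact (Finset.mem_filter.mp hmem).2 j

lemma argmaxFin_le {f : Fin k → ℝ} {i : Fin k} (hi : ∀ j, f j ≤ f i) : argmaxFin f ≤ i :=
  Finset.min'_le _ _ (Finset.mem_filter.mpr ⟨Finset.mem_univ _, hi⟩)

lemma argmaxFin_eq {f : Fin k → ℝ} {i : Fin k} (hi : ∀ j ≠ i, f j < f i) : argmaxFin f = i := by
  by_contra hne
  exact (le_argmaxFin f i).not_gt (hi _ hne)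

end argmaxFin

lemma sum_ovaCode_mul {k : ℕ} (u : Fin k → Bool) (i : Fin k) :
    ∑ j, ovaCode k i j * (if u j then (1 : ℝ) else -1)
      = 2 * (if u i then 1 else -1) - ∑ j, (if u j then (1 : ℝ) else -1) := by
  have : ∀ j, ovaCode k i j = 2 * (if i = j then 1 else 0) - 1 := by
    intro j; unfold ovaCode; split_ifs <;> norm_num
  simp only [this, sub_mul, Finset.sum_sub_distrib, mul_assoc, ite_mul, one_mul, zero_mul,
    ← Finset.mul_sum, Finset.sum_ite_eq, Finset.mem_univ, if_true]

section decode

variable {k : ℕ} [NeZero k]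

lemma eq_false_of_lt_decode_ovaCode {u : Fin k → Bool} {j : Fin k}
    (hj : j < decode (ovaCode k) u) : u j = false := by
  refine Bool.eq_false_iff.mpr fun hu => hj.not_ge (argmaxFin_le fun i => ?_)
  rw [sum_ovaCode_mul, sum_ovaCode_mul, hu, if_pos rfl]
  split_ifs <;> norm_num

lemma decode_ovaCode_true_or (u : Fin k → Bool) :
    u (decode (ovaCode k) u) = true ∨ decode (ovaCode k) u = 0 ∧ ∀ j, u j = false := by
  by_cases hu : ∀ j, u j = false
  · refine Or.inr ⟨le_antisymm (argmaxFin_le fun j => ?_) (Fin.zero_le _), hu⟩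
    simp only [sum_ovaCode_mul, hu]
    exact le_rfl
  · push Not at hu
    obtain ⟨j, hj⟩ := hu
    refine Or.inl (Bool.eq_true_of_not_eq_false fun hd => ?_)
    have hmax := le_argmaxFin (fun i => ∑ l, ovaCode k i l * (if u l then (1 : ℝ) else -1)) j
    change _ ≤ ∑ l, ovaCode k (decode (ovaCode k) u) l * _ at hmax
    rw [sum_ovaCode_mul, sum_ovaCode_mul, Bool.eq_true_of_not_eq_false hj, hd] at hmax
    norm_num at hmax

end decode

lemma mem_labels_of_mem_treeClass {X : Type*} {k : ℕ} {H : Set (X → Bool)} :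
    ∀ {T : LTree k} {g : X → Fin k}, g ∈ treeClass H T → ∀ x, g x ∈ T.labels
  | .leaf _, _, rfl, _ => List.mem_singleton_self _
  | .node l r, _, ⟨c, _, fl, hfl, fr, hfr, rfl⟩, x => by
    simp only [LTree.labels, List.mem_append]
    cases c x
    · exact Or.inl (mem_labels_of_mem_treeClass hfl x)
    · exact Or.inr (mem_labels_of_mem_treeClass hfr x)

lemma labels_eq_of_mem_treeClass {X ι : Type*} {k : ℕ} {H : Set (X → Bool)} {x : ι → X}
    {y : ι → Fin k}
    (hH : ∀ c ∈ H, ∀ s : Fin k → Bool, (∀ i, c (x i) = s (y i)) → ∀ i j, s (y i) = s (y j)) :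
    ∀ {T : LTree k} {g : X → Fin k}, T.labels.Nodup → g ∈ treeClass H T →
      (∀ i, g (x i) = y i) → ∀ i j, y i = y j
  | .leaf _, _, _, rfl, hfit, i, j => (hfit i).symm.trans (hfit j)
  | .node l r, _, hT, ⟨c, hc, fl, hfl, fr, hfr, rfl⟩, hfit, i, j => by
    rw [LTree.labels, List.nodup_append] at hT
    have hside : ∀ m, c (x m) = decide (y m ∈ r.labels) := by
      intro m
      have hm := hfit m
      cases hcm : c (x m) <;> simp only [hcm] at hm <;> rw [← hm]
      · exact (decide_eq_false fun hr =>
          hT.2.2 _ (mem_labels_of_mem_treeClass hfl _) _ hr rfl).symm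
      · exact (decide_eq_true (mem_labels_of_mem_treeClass hfr _)).symm
    have hconst : ∀ m, c (x m) = c (x i) := by
      intro m
      simp only [hside]
      exact hH c hc (fun l => decide (l ∈ r.labels)) hside m i
    cases hci : c (x i)
    · refine labels_eq_of_mem_treeClass hH hT.1 hfl (fun m => ?_) i j
      simpa [hconst m, hci] using hfit m
    · refine labels_eq_of_mem_treeClass hH hT.2.1 hfr (fun m => ?_) i j
      simpa [hconst m, hci] using hfit m

section empiricalMeasure

variable {α ι : Type*} [MeasurableSpace α] [Fintype ι]

noncomputable def empiricalMeasure (z : ι → α) : Measure α :=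
  (Fintype.card ι : ℝ≥0∞)⁻¹ • ∑ i, Measure.dirac (z i)

lemma empiricalMeasure_apply [MeasurableSingletonClass α] (z : ι → α) (s : Set α) :
    empiricalMeasure z s = (Fintype.card ι : ℝ≥0∞)⁻¹ * ∑ i, s.indicator 1 (z i) := by
  simp [empiricalMeasure, Measure.coe_finsetSum, Measure.dirac_apply]

instance [Nonempty ι] (z : ι → α) : IsProbabilityMeasure (empiricalMeasure z) := by
  constructor
  simp [empiricalMeasure, Measure.coe_finsetSum, ENNReal.inv_mul_cancel]

variable [MeasurableSingletonClass α]

lemma empiricalMeasure_eq_zero {z : ι → α} {s : Set α} (hs : ∀ i, z i ∉ s) :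
    empiricalMeasure z s = 0 := by
  simp [empiricalMeasure_apply, hs]

lemma inv_card_le_empiricalMeasure {z : ι → α} {s : Set α} {i : ι} (hi : z i ∈ s) :
    (Fintype.card ι : ℝ≥0∞)⁻¹ ≤ empiricalMeasure z s := by
  rw [empiricalMeasure_apply]
  calc (Fintype.card ι : ℝ≥0∞)⁻¹ = (Fintype.card ι : ℝ≥0∞)⁻¹ * s.indicator 1 (z i) := by
        simp [hi]
    _ ≤ _ := by
        gcongr
        exact Finset.single_le_sum (f := fun j => s.indicator 1 (z j)) (fun _ _ => zero_le)
          (Finset.mem_univ i)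

end empiricalMeasure

section errStar

variable {X ι : Type*} [MeasurableSpace X] [MeasurableSingletonClass X] [Fintype ι] {k : ℕ}
  {H : Set (X → Fin k)} {x : ι → X} {y : ι → Fin k}

lemma errStar_empiricalMeasure_eq_zero {h : X → Fin k} (hH : h ∈ H) (hfit : ∀ i, h (x i) = y i) :
    errStar (empiricalMeasure fun i => (x i, y i)) H = 0 :=
  le_antisymm ((iInf₂_le h hH).trans_eq (empiricalMeasure_eq_zero fun i hi => hi (hfit i)))
    zero_le

lemma errStar_empiricalMeasure_pos (hH : ∀ h ∈ H, ¬ ∀ i, h (x i) = y i) :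
    0 < errStar (empiricalMeasure fun i => (x i, y i)) H := by
  refine (ENNReal.inv_pos.mpr (ENNReal.natCast_ne_top (Fintype.card ι))).trans_le
    (le_iInf₂ fun h hh => ?_)
  push Not at hH
  obtain ⟨i, hi⟩ := hH h hh
  exact inv_card_le_empiricalMeasure (s := {p : X × Fin k | h p.1 ≠ p.2}) hi

end errStar

def config : Fin 10 → Fin 2 → ℝ :=
  ![![15, 14], ![30, 28], ![6, -10], ![14, 15], ![28, 30], ![-10, 6],
    ![-5, 2], ![2, -5], ![-62, 30], ![30, -62]]

def configClass : Fin 10 → Fin 3 := ![0, 0, 0, 1, 1, 1, 2, 2, 2, 2]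

lemma halfspace_two_const_of_const_on_configClass {c : (Fin 2 → ℝ) → Bool}
    (hc : c ∈ halfspace 2) {s : Fin 3 → Bool} (hs : ∀ i, c (config i) = s (configClass i)) :
    ∀ a b, s a = s b := by
  obtain ⟨a, b, e, hc⟩ := exists_of_mem_halfspace_two hc
  simp only [hc] at hs
  have key : s 0 = s 1 ∧ s 1 = s 2 := by
    have h0 := hs 0; have h1 := hs 1; have h2 := hs 2; have h3 := hs 3; have h4 := hs 4
    have h5 := hs 5; have h6 := hs 6; have h7 := hs 7; have h8 := hs 8; have h9 := hs 9
    simp only [config, configClass, Fin.isValue, cons_val', cons_val_zero, cons_val_fin_one,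
      cons_val_one, cons_val, mul_neg] at h0 h1 h2 h3 h4 h5 h6 h7 h8 h9
    cases hs0 : s 0 <;> cases hs1 : s 1 <;> cases hs2 : s 2 <;>
      simp only [hs0, hs1, hs2, decide_eq_true_iff, decide_eq_false_iff_not, not_le]
        at h0 h1 h2 h3 h4 h5 h6 h7 h8 h9 ⊢ <;>
      first | decide | (exfalso; linarith)
  intro i j
  fin_cases i <;> fin_cases j <;> simp [key.1, key.2]

def configScores (k : ℕ) (j : Fin k) : Fin (2 + 1) → ℝ :=
  if (j : ℕ) = 0 then ![1, 0, 0] else if (j : ℕ) = 1 then ![0, 1, 0]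
  else if (j : ℕ) = 2 then ![-1, -1, 0] else 0

lemma sum_configScores_mul_aug {k : ℕ} (j : Fin k) (x : Fin 2 → ℝ) :
    ∑ l, configScores k j l * aug x l =
      if (j : ℕ) = 0 then x 0 else if (j : ℕ) = 1 then x 1
      else if (j : ℕ) = 2 then -x 0 - x 1 else 0 := by
  unfold configScores
  split_ifs <;> simp [sum_mul_aug_two, sub_eq_add_neg]

lemma argmaxFin_configScores {k : ℕ} [NeZero k] (hk : 3 ≤ k) (i : Fin 10) :
    argmaxFin (fun j => ∑ l, configScores k j l * aug (config i) l)
      = Fin.castLE hk (configClass i) := by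
  refine argmaxFin_eq fun j hj => ?_
  have hj' : (j : ℕ) ≠ configClass i := fun h => hj (Fin.ext h)
  simp only [sum_configScores_mul_aug, Fin.val_castLE]
  fin_cases i <;> simp [config, configClass] at hj' ⊢ <;> split_ifs <;> norm_num

lemma not_ovaCode_fits_config {c₀ c₁ : (Fin 2 → ℝ) → Bool}
    (h₀ : c₀ ∈ halfspace 2) (h₁ : c₁ ∈ halfspace 2)
    (hcls₀ : ∀ i, configClass i = 0 → c₀ (config i) = true ∨ c₁ (config i) = false)
    (hcls₁ : ∀ i, configClass i = 1 → c₀ (config i) = false ∧ c₁ (config i) = true)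
    (hcls₂ : ∀ i, configClass i = 2 → c₀ (config i) = false ∧ c₁ (config i) = false) :
    False := by
  obtain ⟨a₀, b₀, e₀, hc₀⟩ := exists_of_mem_halfspace_two h₀
  obtain ⟨a₁, b₁, e₁, hc₁⟩ := exists_of_mem_halfspace_two h₁
  have p0 := hcls₀ 0 rfl; have p1 := hcls₀ 1 rfl
  have p3 := hcls₁ 3 rfl; have p4 := hcls₁ 4 rfl; have p5 := hcls₁ 5 rfl
  have p8 := hcls₂ 8 rfl; have p9 := hcls₂ 9 rfl
  simp only [hc₀, hc₁, decide_eq_true_iff, decide_eq_false_iff_not, not_le, config, Fin.isValue,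
    cons_val_zero, cons_val_fin_one, cons_val_one, cons_val, mul_neg]
    at p0 p1 p3 p4 p5 p8 p9
  rcases p0 with p0 | p0 <;> rcases p1 with p1 | p1 <;> linarith

lemma not_ovaCode_fits_embedded_config {d k : ℕ} [NeZero k] (hd : 2 ≤ d) (hk : 3 ≤ k)
    {g : (Fin d → ℝ) → Fin k} (hg : g ∈ ecocClass (halfspace d) (ovaCode k)) :
    ¬ ∀ i, g ((planeProj hd)ᵀ *ᵥ config i) = Fin.castLE hk (configClass i) := by
  obtain ⟨h, hh, rfl⟩ := hg
  intro hfit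
  let u (i : Fin 10) (j : Fin k) : Bool := h j ((planeProj hd)ᵀ *ᵥ config i)
  have hdec {i : Fin 10} {c : Fin 3} (hi : configClass i = c) :
      decode (ovaCode k) (u i) = Fin.castLE hk c := hi ▸ hfit i
  refine not_ovaCode_fits_config
    (comp_mulVec_mem_halfspace (planeProj hd)ᵀ (hh (Fin.castLE hk 0)))
    (comp_mulVec_mem_halfspace (planeProj hd)ᵀ (hh (Fin.castLE hk 1)))
    (fun i hi => ?_) (fun i hi => ?_) (fun i hi => ?_)
  · rcases decode_ovaCode_true_or (u i) with hu | ⟨-, hu⟩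
    · exact Or.inl (hdec hi ▸ hu)
    · exact Or.inr (hu _)
  · refine ⟨eq_false_of_lt_decode_ovaCode (u := u i) (hdec hi ▸ by simp [Fin.lt_def]), ?_⟩
    rcases decode_ovaCode_true_or (u i) with hu | ⟨h0, -⟩
    · exact hdec hi ▸ hu
    · exact absurd ((hdec hi).symm.trans h0) (by simp [Fin.ext_iff])
  · exact ⟨eq_false_of_lt_decode_ovaCode (u := u i) (hdec hi ▸ by simp [Fin.lt_def]),
      eq_false_of_lt_decode_ovaCode (u := u i) (hdec hi ▸ by simp [Fin.lt_def])⟩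

/-- For every d ≥ 2 and k ≥ 3 there exists a Borel probability distribution D over
ℝ^d × [k] such that Err*_D(L) = 0 while Err*_D(W^d_trees) > 0 and Err*_D(W^d_OvA) > 0: the
essential containments of W^d_trees and W^d_OvA in the multiclass SVM class L are strict. -/
theorem stmt9 (d k : ℕ) [NeZero k] (hd : 2 ≤ d) (hk : 3 ≤ k) :
    ∃ D : Measure ((Fin d → ℝ) × Fin k), IsProbabilityMeasure D ∧
      errStar D (msvm d k) = 0 ∧
      0 < errStar D (treesClass (halfspace d) k) ∧
      0 < errStar D (ecocClass (halfspace d) (ovaCode k)) := by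
  let x (i : Fin 10) : Fin d → ℝ := (planeProj hd)ᵀ *ᵥ config i
  let y (i : Fin 10) : Fin k := Fin.castLE hk (configClass i)
  refine ⟨empiricalMeasure fun i => (x i, y i), inferInstance, ?_, ?_, ?_⟩
  · refine errStar_empiricalMeasure_eq_zero
      (comp_mulVec_mem_msvm (planeProj hd) ⟨configScores k, rfl⟩) fun i => ?_
    simp only [x, planeProj_mulVec_transpose]
    exact argmaxFin_configScores hk i
  · refine errStar_empiricalMeasure_pos fun g hg hfit => ?_
    obtain ⟨T, hT, hgT⟩ := Set.mem_iUnion₂.mp hg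
    have hH : ∀ c ∈ halfspace d, ∀ s : Fin k → Bool, (∀ i, c (x i) = s (y i)) →
        ∀ i j, s (y i) = s (y j) := fun c hc s hs i j =>
      halfspace_two_const_of_const_on_configClass (comp_mulVec_mem_halfspace _ hc)
        (s := s ∘ Fin.castLE hk) hs _ _
    have h03 :=
      labels_eq_of_mem_treeClass hH (hT.nodup_iff.mpr (List.nodup_finRange k)) hgT hfit 0 3
    simp [y, configClass, Fin.ext_iff] at h03
  · exact errStar_empiricalMeasure_pos fun g hg => not_ovaCode_fits_embedded_config hd hk hg
end

section
/- There exists a universal constant C > 0 such that the following holds for all integers d, l ≥ 2 and k ≥ 2. Let L : {±1}^l → [k] be any function, let H ⊆ {±1}^X be a binary hypothesis class of VC dimension d, and define L(H) = {x ↦ L(h₁(x),…,h_l(x)) : h₁,…,h_l ∈ H}. Then the graph dimension of L(H) satisfies d_G(L(H)) ≤ C·l·d·ln(l·d). -/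
open MeasureTheory
open scoped ENNReal

/-!
Restricted to a finite set `S` of size `m`, the class `H` has at most `(m + 1) ^ d` behaviours
by Sauer–Shelah, so the aggregated class `L(H)` has at most `(m + 1) ^ (l d)`. A G-shattered `S`
needs `2 ^ m` behaviours, and `2 ^ m ≤ (m + 1) ^ (l d)` forces `m = O(l d log (l d))`.
-/

open Finset

theorem sum_Iic_choose_le_add_one_pow (m d : ℕ) : ∑ i ∈ Iic d, m.choose i ≤ (m + 1) ^ d := by
  rw [add_pow, Nat.range_succ_eq_Iic]
  refine sum_le_sum fun i hi => ?_
  calc m.choose i ≤ m ^ i := Nat.choose_le_pow m i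
    _ ≤ m ^ i * 1 ^ (d - i) * d.choose i := by
        rw [one_pow, mul_one]
        exact Nat.le_mul_of_pos_right _ (Nat.choose_pos (mem_Iic.mp hi))

def aggregateClass {X ι B Y : Type*} (L : (ι → B) → Y) (H : Set (X → B)) : Set (X → Y) :=
  { g | ∃ h : ι → X → B, (∀ j, h j ∈ H) ∧ g = fun x => L (fun j => h j x) }

section Restrictions

variable {X : Type*} (S : Set X) [Finite S]

theorem ncard_domRestrict_image_le_sum_choose {H : Set (X → Bool)} {d : ℕ} (hH : VCDimLE H d) :
    (S.domRestrict '' H).ncard ≤ ∑ i ∈ Iic d, S.ncard.choose i := by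
  classical
  have := Fintype.ofFinite S
  set 𝓕 : Finset (Finset S) := univ.filter fun T => ∃ h ∈ H, ∀ x : S, h x = true ↔ x ∈ T
  have hcard : (S.domRestrict '' H).ncard ≤ #𝓕 := by
    rw [← Set.ncard_coe_finset 𝓕]
    refine Set.ncard_le_ncard_of_injOn (fun u => univ.filter fun x => u x = true) ?_ ?_
      (finite_toSet _)
    · rintro _ ⟨h, hh, rfl⟩
      refine mem_filter.mpr ⟨mem_univ _, h, hh, fun x => ?_⟩
      simp only [mem_filter, mem_univ, true_and]
      rfl
    · intro u _ v _ huv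
      funext x
      simpa using Finset.ext_iff.mp huv x
  have hvc : 𝓕.vcDim ≤ d := by
    refine Finset.sup_le fun s hs => ?_
    rw [← card_map (Function.Embedding.subtype _)]
    refine hH _ fun b => ?_
    obtain ⟨u, hu, hsu⟩ := mem_shatterer.mp hs (filter_subset (fun x : S => b x = true) s)
    obtain ⟨h, hh, hhu⟩ := (mem_filter.mp hu).2
    refine ⟨h, hh, ?_⟩
    simp only [mem_map, Function.Embedding.coe_subtype]
    rintro _ ⟨x, hx, rfl⟩
    have hxu := Finset.ext_iff.mp hsu x
    simp only [mem_inter, mem_filter, hx, true_and] at hxu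
    exact Bool.eq_iff_iff.mpr ((hhu x).trans hxu)
  calc (S.domRestrict '' H).ncard ≤ #𝓕 := hcard
    _ ≤ #𝓕.shatterer := card_le_card_shatterer 𝓕
    _ ≤ ∑ i ∈ Iic 𝓕.vcDim, (Fintype.card S).choose i := card_shatterer_le_sum_vcDim
    _ ≤ ∑ i ∈ Iic d, S.ncard.choose i := by
        rw [← Nat.card_eq_fintype_card, Nat.card_coe_set_eq]
        exact sum_le_sum_of_subset (Iic_subset_Iic.mpr hvc)

theorem GShatters.two_pow_ncard_le {Y : Type*} [Finite Y] {G : Set (X → Y)} (hG : GShatters G S) :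
    2 ^ S.ncard ≤ (S.domRestrict '' G).ncard := by
  have := Fintype.ofFinite S
  obtain ⟨f, hf⟩ := hG
  have hsurj : ∀ T : Set S, ∃ v ∈ S.domRestrict '' G, {x | v x = f x} = T := by
    intro T
    obtain ⟨g, hg, hgT, hgS⟩ := hf (Subtype.val '' T) (Subtype.coe_image_subset S T)
    refine ⟨_, ⟨g, hg, rfl⟩, Set.ext fun x => ⟨fun hx => ?_, fun hx => hgT x ⟨x, hx, rfl⟩⟩⟩
    by_contra hxT
    exact hgS x ⟨x.2, fun ⟨y, hy, hyx⟩ => hxT (Subtype.ext hyx ▸ hy)⟩ hx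
  calc 2 ^ S.ncard = (Set.univ : Set (Set S)).ncard := by
        rw [Set.ncard_univ, Nat.card_eq_fintype_card, Fintype.card_set,
          ← Nat.card_eq_fintype_card, Nat.card_coe_set_eq]
    _ ≤ ((fun v : S → Y => {x | v x = f x}) '' (S.domRestrict '' G)).ncard :=
        Set.ncard_le_ncard (fun T _ => hsurj T) (Set.toFinite _)
    _ ≤ (S.domRestrict '' G).ncard := Set.ncard_image_le

theorem ncard_domRestrict_image_aggregateClass_le {ι B Y : Type*} [Finite ι] [Finite B]
    (L : (ι → B) → Y) (H : Set (X → B)) :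
    (S.domRestrict '' aggregateClass L H).ncard ≤ (S.domRestrict '' H).ncard ^ Nat.card ι := by
  have hsub : S.domRestrict '' aggregateClass L H ⊆
      Set.range fun u : ι → S.domRestrict '' H => fun x => L fun j => (u j).1 x := by
    rintro _ ⟨_, ⟨h, hH, rfl⟩, rfl⟩
    exact ⟨fun j => ⟨S.domRestrict (h j), h j, hH j, rfl⟩, rfl⟩
  calc (S.domRestrict '' aggregateClass L H).ncard
      ≤ (Set.range fun u : ι → S.domRestrict '' H => fun x => L fun j => (u j).1 x).ncard :=
        Set.ncard_le_ncard hsub (Set.finite_range _)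
    _ ≤ Nat.card (ι → S.domRestrict '' H) := by
        rw [← Set.image_univ, ← Set.ncard_univ]
        exact Set.ncard_image_le
    _ = (S.domRestrict '' H).ncard ^ Nat.card ι := by
        rw [Nat.card_fun, Nat.card_coe_set_eq]

end Restrictions

theorem le_two_mul_mul_log_of_sub_one_le_mul_log {a y : ℝ} (ha : 1 ≤ a) (hy : 0 < y)
    (h : y - 1 ≤ a * Real.log y) : y ≤ 2 * a * Real.log (2 * a) := by
  have h2a : 0 < 2 * a := by linarith
  -- `log` lies below its tangent line at `2 * a`.
  have htangent : Real.log y ≤ Real.log (2 * a) + y / (2 * a) - 1 := by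
    have := Real.log_le_sub_one_of_pos (div_pos hy h2a)
    rw [Real.log_div hy.ne' h2a.ne'] at this
    linarith
  have hmul : a * Real.log y ≤ a * Real.log (2 * a) + y / 2 - a :=
    calc a * Real.log y ≤ a * (Real.log (2 * a) + y / (2 * a) - 1) :=
          mul_le_mul_of_nonneg_left htangent (by linarith)
      _ = a * Real.log (2 * a) + y / 2 - a := by field_simp
  linarith

theorem le_mul_log_of_two_pow_le_add_one_pow {m n : ℕ} (hn : 3 ≤ n)
    (h : 2 ^ m ≤ (m + 1) ^ n) : (m : ℝ) ≤ 6 * n * Real.log n := by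
  have hn' : (3 : ℝ) ≤ n := by exact_mod_cast hn
  have hlog2 : 2 / 3 < Real.log 2 := by linarith [Real.log_two_gt_d9]
  have hlog2_pos : 0 < Real.log 2 := by linarith
  set a := (n : ℝ) / Real.log 2
  have ha : 1 ≤ a := by
    rw [le_div_iff₀ hlog2_pos]
    linarith [Real.log_two_lt_d9]
  have h2a : 2 * a ≤ 3 * n := by
    rw [← mul_div_assoc, div_le_iff₀ hlog2_pos]
    nlinarith
  have hlog : (m : ℝ) * Real.log 2 ≤ n * Real.log (m + 1) := by
    have := Real.log_le_log (by positivity)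
      (show (2 : ℝ) ^ m ≤ ((m : ℝ) + 1) ^ n by exact_mod_cast h)
    rwa [Real.log_pow, Real.log_pow] at this
  have hy : (m : ℝ) + 1 ≤ 2 * a * Real.log (2 * a) := by
    refine le_two_mul_mul_log_of_sub_one_le_mul_log ha (by positivity) ?_
    rw [add_sub_cancel_right, div_mul_eq_mul_div, le_div_iff₀ hlog2_pos]
    exact hlog
  have hlog2a : Real.log (2 * a) ≤ 2 * Real.log n := by
    rw [← Real.log_rpow (by positivity), Real.rpow_two]
    exact Real.log_le_log (by positivity) (by nlinarith)
  calc (m : ℝ) ≤ 2 * a * Real.log (2 * a) := by linarith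
    _ ≤ 3 * n * (2 * Real.log n) :=
        mul_le_mul h2a hlog2a (Real.log_nonneg (by linarith)) (by positivity)
    _ = 6 * n * Real.log n := by ring

/-- There is a universal constant C > 0 such that for all integers d, l ≥ 2,
k ≥ 2, every function L : {±1}^l → [k] and every binary class H of VC dimension d, the graph
dimension of L(H) = {x ↦ L(h₁(x),…,h_l(x)) : h₁,…,h_l ∈ H} is at most C·l·d·ln(l·d). -/
theorem stmt15 : ∃ C : ℝ, 0 < C ∧ ∀ (d l k : ℕ), 2 ≤ d → 2 ≤ l → 2 ≤ k →
    ∀ (X : Type*) (L : (Fin l → Bool) → Fin k) (H : Set (X → Bool)), VCDimLE H d →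
      ∀ S : Finset X,
        GShatters { g : X → Fin k | ∃ h : Fin l → X → Bool,
          (∀ j, h j ∈ H) ∧ g = fun x => L (fun j => h j x) } ↑S →
        (S.card : ℝ) ≤ C * l * d * Real.log (l * d) := by
  refine ⟨6, by norm_num, fun d l k hd hl _ X L H hH S hS => ?_⟩
  have hcount : 2 ^ S.card ≤ (S.card + 1) ^ (l * d) := by
    rw [← Set.ncard_coe_finset]
    calc 2 ^ (S : Set X).ncard ≤ ((S : Set X).domRestrict '' aggregateClass L H).ncard :=
          hS.two_pow_ncard_le
      _ ≤ ((S : Set X).domRestrict '' H).ncard ^ l := by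
          simpa using ncard_domRestrict_image_aggregateClass_le (S : Set X) L H
      _ ≤ (((S : Set X).ncard + 1) ^ d) ^ l := by
          gcongr
          exact (ncard_domRestrict_image_le_sum_choose _ hH).trans
            (sum_Iic_choose_le_add_one_pow _ _)
      _ = ((S : Set X).ncard + 1) ^ (l * d) := by rw [← pow_mul, mul_comm]
  have hbound := le_mul_log_of_two_pow_le_add_one_pow (by nlinarith) hcount
  push_cast at hbound
  linarith
end
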